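/- arXiv:2002.12434 — 10 statements merged into one kernel-verified Lean document; each statement's English description precedes it below -/
import Mathlib

section
/- Let $P \subset \mathbb{R}^2$ be the trapezoid $\{p : 0 \le \langle p, e_1\rangle \le \lambda_1,\ 0 \le \langle p, e_2\rangle,\ \langle p, e_2 + A e_1\rangle \le \lambda_2\}$ where $A, \lambda_1, \lambda_2$ are integers with $\lambda_1 > 0$, $\lambda_2 > 0$, $\lambda_2 > A\lambda_1$. Let $c$ be an integer with $c \ge A$ and $\lambda_2 > c\lambda_1$, and set $\tilde A = 2c - A$, $\tilde\lambda_2 = \lambda_2 + (c - A)\lambda_1$, and $\tilde P = \{p : 0 \le \langle p, e_1\rangle \le \lambda_1,\ 0 \le \langle p, e_2\rangle,\ \langle p, e_2 + \tilde A e_1\rangle \le \tilde\lambda_2\}$. Then for every affine line $\ell$ in direction $(-1,c)$, the sets $P \cap \mathbb{Z}^2 \cap \ell$ and $\tilde P \cap \mathbb{Z}^2 \cap \ell$ have the same cardinality. -/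
private lemma trapezoid_slide_aux (A lam1 lam2 c m : ℤ)
    (h1 : 0 < lam1) (h2 : 0 < lam2)
    (hc : A ≤ c) (hc2 : c * lam1 < lam2) :
    Set.ncard {x : ℤ | 0 ≤ x ∧ x ≤ lam1 ∧ c * x ≤ m ∧ m - lam2 ≤ (c - A) * x} =
    Set.ncard {x : ℤ | 0 ≤ x ∧ x ≤ lam1 ∧ c * x ≤ m ∧
        (c - A) * x ≤ (c - A) * lam1 + lam2 - m} := by
  set T : Set ℤ := {x : ℤ | 0 ≤ x ∧ x ≤ lam1 ∧ m - lam2 ≤ (c - A) * x} with hT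
  set T' : Set ℤ := {x : ℤ | 0 ≤ x ∧ x ≤ lam1 ∧ (c - A) * x ≤ (c - A) * lam1 + lam2 - m}
    with hT'
  set U : Set ℤ := {x : ℤ | 0 ≤ x ∧ x ≤ lam1 ∧ m < c * x} with hU
  -- key fact: membership in U forces both d-constraints
  have key : ∀ x : ℤ, 0 ≤ x → x ≤ lam1 → m < c * x →
      (m - lam2 ≤ (c - A) * x ∧ (c - A) * x ≤ (c - A) * lam1 + lam2 - m) := by
    intro x hx0 hx1 hxm
    have hmlt : m < lam2 := by
      rcases le_or_gt 0 c with h | h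
      · nlinarith [mul_le_mul_of_nonneg_left hx1 h]
      · nlinarith [mul_nonpos_of_nonpos_of_nonneg h.le hx0]
    have hd0 : 0 ≤ (c - A) * x := mul_nonneg (by omega) hx0
    have hd1 : (c - A) * x ≤ (c - A) * lam1 :=
      mul_le_mul_of_nonneg_left hx1 (by omega)
    constructor <;> omega
  have hUT : U ⊆ T := by
    rintro x ⟨hx0, hx1, hxm⟩
    exact ⟨hx0, hx1, (key x hx0 hx1 hxm).1⟩
  have hUT' : U ⊆ T' := by
    rintro x ⟨hx0, hx1, hxm⟩
    exact ⟨hx0, hx1, (key x hx0 hx1 hxm).2⟩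
  have hS : {x : ℤ | 0 ≤ x ∧ x ≤ lam1 ∧ c * x ≤ m ∧ m - lam2 ≤ (c - A) * x} = T \ U := by
    ext x
    simp only [hT, hU, Set.mem_setOf_eq, Set.mem_diff]
    constructor
    · rintro ⟨a, b, c', d'⟩
      exact ⟨⟨a, b, d'⟩, by push_neg; intro _ _; omega⟩
    · rintro ⟨⟨a, b, d'⟩, h⟩
      push_neg at h
      exact ⟨a, b, h a b, d'⟩
  have hS' : {x : ℤ | 0 ≤ x ∧ x ≤ lam1 ∧ c * x ≤ m ∧
      (c - A) * x ≤ (c - A) * lam1 + lam2 - m} = T' \ U := by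
    ext x
    simp only [hT', hU, Set.mem_setOf_eq, Set.mem_diff]
    constructor
    · rintro ⟨a, b, c', d'⟩
      exact ⟨⟨a, b, d'⟩, by push_neg; intro _ _; omega⟩
    · rintro ⟨⟨a, b, d'⟩, h⟩
      push_neg at h
      exact ⟨a, b, h a b, d'⟩
  have hTfin : T.Finite := by
    apply (Set.finite_Icc (0 : ℤ) lam1).subset
    rintro x ⟨hx0, hx1, _⟩
    exact Set.mem_Icc.mpr ⟨hx0, hx1⟩
  have hT'fin : T'.Finite := by
    apply (Set.finite_Icc (0 : ℤ) lam1).subset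
    rintro x ⟨hx0, hx1, _⟩
    exact Set.mem_Icc.mpr ⟨hx0, hx1⟩
  have hTT' : T' = (fun x : ℤ => lam1 - x) '' T := by
    ext x
    simp only [Set.mem_image, Set.mem_setOf_eq, hT, hT']
    constructor
    · rintro ⟨hx0, hx1, hx2⟩
      refine ⟨lam1 - x, ⟨by omega, by omega, ?_⟩, by ring⟩
      have : (c - A) * (lam1 - x) = (c - A) * lam1 - (c - A) * x := by ring
      omega
    · rintro ⟨y, ⟨hy0, hy1, hy2⟩, rfl⟩
      refine ⟨by omega, by omega, ?_⟩
      have : (c - A) * (lam1 - y) = (c - A) * lam1 - (c - A) * y := by ring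
      omega
  have hcardT : T'.ncard = T.ncard := by
    rw [hTT']
    exact Set.ncard_image_of_injective T (fun a b h => by omega)
  have hUfin : U.Finite := hTfin.subset hUT
  rw [hS, hS', Set.ncard_diff hUT hUfin, Set.ncard_diff hUT' hUfin, hcardT]

/-- **Trapezoid sliding lemma (cardinality on lines).**
`P` is the trapezoid `{p : 0 ≤ p₁ ≤ λ₁, 0 ≤ p₂, p₂ + A p₁ ≤ λ₂}` and `P̃` its slide
with `Ã = 2c - A`, `λ̃₂ = λ₂ + (c - A) λ₁`.  For every affine line in direction `(-1, c)`,
the lattice points of `P` and of `P̃` on that line have the same cardinality. -/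
theorem trapezoid_slide_card (A lam1 lam2 c : ℤ)
    (h1 : 0 < lam1) (h2 : 0 < lam2) (h3 : A * lam1 < lam2)
    (hc : A ≤ c) (hc2 : c * lam1 < lam2) (q : ℝ × ℝ) :
    Set.ncard {p : ℤ × ℤ |
        (0 ≤ p.1 ∧ p.1 ≤ lam1 ∧ 0 ≤ p.2 ∧ p.2 + A * p.1 ≤ lam2) ∧
        ∃ t : ℝ, ((p.1 : ℝ) = q.1 + t * (-1) ∧ (p.2 : ℝ) = q.2 + t * c)} =
    Set.ncard {p : ℤ × ℤ |
        (0 ≤ p.1 ∧ p.1 ≤ lam1 ∧ 0 ≤ p.2 ∧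
          p.2 + (2 * c - A) * p.1 ≤ lam2 + (c - A) * lam1) ∧
        ∃ t : ℝ, ((p.1 : ℝ) = q.1 + t * (-1) ∧ (p.2 : ℝ) = q.2 + t * c)} := by
  have hline : ∀ p : ℤ × ℤ,
      (∃ t : ℝ, ((p.1 : ℝ) = q.1 + t * (-1) ∧ (p.2 : ℝ) = q.2 + t * c)) ↔
      ((p.2 : ℝ) + c * p.1 = q.2 + c * q.1) := by
    intro p
    constructor
    · rintro ⟨t, ht1, ht2⟩
      rw [ht1, ht2]; ring
    · intro h
      exact ⟨q.1 - p.1, by ring, by linear_combination h⟩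
  by_cases hm : ∃ m : ℤ, (m : ℝ) = q.2 + c * q.1
  · obtain ⟨m, hm⟩ := hm
    have hline' : ∀ p : ℤ × ℤ,
        (∃ t : ℝ, ((p.1 : ℝ) = q.1 + t * (-1) ∧ (p.2 : ℝ) = q.2 + t * c)) ↔
        p.2 + c * p.1 = m := by
      intro p
      rw [hline p, ← hm]
      constructor
      · intro h; exact_mod_cast h
      · intro h; exact_mod_cast congrArg (fun z : ℤ => (z : ℝ)) h
    have hinj : Function.Injective (fun x : ℤ => ((x, m - c * x) : ℤ × ℤ)) := by
      intro a b h
      simpa using congrArg Prod.fst h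
    have hE1 : {p : ℤ × ℤ |
        (0 ≤ p.1 ∧ p.1 ≤ lam1 ∧ 0 ≤ p.2 ∧ p.2 + A * p.1 ≤ lam2) ∧
        ∃ t : ℝ, ((p.1 : ℝ) = q.1 + t * (-1) ∧ (p.2 : ℝ) = q.2 + t * c)} =
        (fun x : ℤ => ((x, m - c * x) : ℤ × ℤ)) ''
          {x : ℤ | 0 ≤ x ∧ x ≤ lam1 ∧ c * x ≤ m ∧ m - lam2 ≤ (c - A) * x} := by
      ext ⟨a, b⟩
      simp only [Set.mem_setOf_eq, Set.mem_image, Prod.mk.injEq, hline' (a, b)]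
      constructor
      · rintro ⟨⟨ha0, ha1, hb0, hab⟩, hl⟩
        refine ⟨a, ⟨ha0, ha1, by omega, by nlinarith⟩, rfl, by omega⟩
      · rintro ⟨x, ⟨hx0, hx1, hx2, hx3⟩, rfl, rfl⟩
        exact ⟨⟨hx0, hx1, by omega, by nlinarith⟩, by ring⟩
    have hE2 : {p : ℤ × ℤ |
        (0 ≤ p.1 ∧ p.1 ≤ lam1 ∧ 0 ≤ p.2 ∧
          p.2 + (2 * c - A) * p.1 ≤ lam2 + (c - A) * lam1) ∧
        ∃ t : ℝ, ((p.1 : ℝ) = q.1 + t * (-1) ∧ (p.2 : ℝ) = q.2 + t * c)} =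
        (fun x : ℤ => ((x, m - c * x) : ℤ × ℤ)) ''
          {x : ℤ | 0 ≤ x ∧ x ≤ lam1 ∧ c * x ≤ m ∧
            (c - A) * x ≤ (c - A) * lam1 + lam2 - m} := by
      ext ⟨a, b⟩
      simp only [Set.mem_setOf_eq, Set.mem_image, Prod.mk.injEq, hline' (a, b)]
      constructor
      · rintro ⟨⟨ha0, ha1, hb0, hab⟩, hl⟩
        refine ⟨a, ⟨ha0, ha1, by omega, by nlinarith⟩, rfl, by omega⟩
      · rintro ⟨x, ⟨hx0, hx1, hx2, hx3⟩, rfl, rfl⟩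
        exact ⟨⟨hx0, hx1, by omega, by nlinarith⟩, by ring⟩
    rw [hE1, hE2, Set.ncard_image_of_injective _ hinj, Set.ncard_image_of_injective _ hinj]
    exact trapezoid_slide_aux A lam1 lam2 c m h1 h2 hc hc2
  · have hempty : ∀ (P : ℤ × ℤ → Prop),
        {p : ℤ × ℤ | P p ∧
          ∃ t : ℝ, ((p.1 : ℝ) = q.1 + t * (-1) ∧ (p.2 : ℝ) = q.2 + t * c)} = ∅ := by
      intro P
      ext p
      simp only [Set.mem_setOf_eq, Set.mem_empty_iff_false, iff_false, not_and]
      intro _ hl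
      rw [hline p] at hl
      exact hm ⟨p.2 + c * p.1, by push_cast; linarith⟩
    rw [hempty, hempty]
end

section
/- With the notation of the trapezoid sliding lemma ($P$, $\tilde P$, $c \ge A$, $\lambda_2 > c\lambda_1 > 0$, $\tilde A = 2c - A$), the half-plane piece satisfies: $P \cap \{p : \langle p, e_2 + c e_1\rangle \le \lambda_2\} = \tilde P \cap \{p : \langle p, e_2 + c e_1\rangle \le \lambda_2\}$, and both equal the trapezoid with vertices $(0,0)$, $(\lambda_1, 0)$, $(\lambda_1, \lambda_2 - c\lambda_1)$, $(0, \lambda_2)$ (i.e., the convex hull of these four points), provided $c > A$. -/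
lemma trapezoid_hull_eq (c lam1 lam2 : ℝ) (h1 : 0 < lam1) (h2 : 0 < lam2)
    (hc2 : c * lam1 < lam2) :
    {p : ℝ × ℝ | 0 ≤ p.1 ∧ p.1 ≤ lam1 ∧ 0 ≤ p.2 ∧ p.2 + c * p.1 ≤ lam2} =
      convexHull ℝ {((0 : ℝ), (0 : ℝ)), (lam1, (0 : ℝ)), (lam1, lam2 - c * lam1),
        ((0 : ℝ), lam2)} := by
  set S : Set (ℝ × ℝ) := {((0 : ℝ), (0 : ℝ)), (lam1, (0 : ℝ)), (lam1, lam2 - c * lam1),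
        ((0 : ℝ), lam2)} with hS
  set T : Set (ℝ × ℝ) := {p : ℝ × ℝ | 0 ≤ p.1 ∧ p.1 ≤ lam1 ∧ 0 ≤ p.2 ∧ p.2 + c * p.1 ≤ lam2}
  apply le_antisymm
  · -- T ⊆ hull
    intro p hp
    obtain ⟨hx0, hx1, hy0, hy1⟩ := hp
    have hcx : 0 < lam2 - c * p.1 := by
      rcases le_or_gt c 0 with hc | hc
      · nlinarith
      · nlinarith
    set t : ℝ := p.1 / lam1 with ht
    set s : ℝ := p.2 / (lam2 - c * p.1) with hs
    have ht0 : 0 ≤ t := div_nonneg hx0 h1.le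
    have ht1 : t ≤ 1 := (div_le_one h1).2 hx1
    have hs0 : 0 ≤ s := div_nonneg hy0 hcx.le
    have hs1 : s ≤ 1 := (div_le_one hcx).2 (by linarith)
    have hconv := convex_convexHull ℝ S
    have m0 : ((0 : ℝ), (0 : ℝ)) ∈ convexHull ℝ S := subset_convexHull ℝ S (by simp [hS])
    have m1 : (lam1, (0 : ℝ)) ∈ convexHull ℝ S := subset_convexHull ℝ S (by simp [hS])
    have m2 : (lam1, lam2 - c * lam1) ∈ convexHull ℝ S := subset_convexHull ℝ S (by simp [hS])
    have m3 : ((0 : ℝ), lam2) ∈ convexHull ℝ S := subset_convexHull ℝ S (by simp [hS])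
    have q0 : (1 - t) • ((0 : ℝ), (0 : ℝ)) + t • (lam1, (0 : ℝ)) ∈ convexHull ℝ S :=
      hconv m0 m1 (by linarith) ht0 (by ring)
    have q1 : (1 - t) • ((0 : ℝ), lam2) + t • (lam1, lam2 - c * lam1) ∈ convexHull ℝ S :=
      hconv m3 m2 (by linarith) ht0 (by ring)
    have key : p = (1 - s) • ((1 - t) • ((0 : ℝ), (0 : ℝ)) + t • (lam1, (0 : ℝ)))
        + s • ((1 - t) • ((0 : ℝ), lam2) + t • (lam1, lam2 - c * lam1)) := by
      have hx : t * lam1 = p.1 := div_mul_cancel₀ p.1 h1.ne'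
      have hy : s * (lam2 - c * p.1) = p.2 := div_mul_cancel₀ p.2 hcx.ne'
      apply Prod.ext
      · simp only [Prod.smul_def, Prod.fst_add, Prod.smul_fst, smul_eq_mul]
        linear_combination -hx
      · simp only [Prod.smul_def, Prod.snd_add, Prod.smul_snd, smul_eq_mul]
        linear_combination -hy + c * s * hx
    rw [key]
    exact hconv q0 q1 (by linarith) hs0 (by ring)
  · -- hull ⊆ T
    apply convexHull_min
    · intro v hv
      rcases hv with h | h | h | h <;> subst h <;>
        exact ⟨by norm_num <;> linarith, by norm_num <;> linarith, by norm_num <;> linarith, by norm_num <;> linarith⟩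
    · rintro ⟨x1, y1⟩ ⟨a1, a2, a3, a4⟩ ⟨x2, y2⟩ ⟨b1, b2, b3, b4⟩ a b ha hb hab
      refine ⟨?_, ?_, ?_, ?_⟩ <;> simp [Prod.smul_def] <;> nlinarith

/-- **Half-plane piece of the trapezoid sliding lemma.**
With `P`, `P̃` as in the trapezoid sliding lemma and `H = {p : p₂ + c p₁ ≤ λ₂}`,
we have `P ∩ H = P̃ ∩ H`, and both equal the trapezoid (convex hull) with vertices
`(0,0)`, `(λ₁,0)`, `(λ₁, λ₂ - cλ₁)`, `(0, λ₂)`, provided `c > A`. -/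
theorem trapezoid_halfplane_piece (A c lam1 lam2 : ℤ)
    (h1 : 0 < lam1) (h2 : 0 < lam2) (h3 : A * lam1 < lam2)
    (hcA : A < c) (hc2 : c * lam1 < lam2) :
    ({p : ℝ × ℝ | 0 ≤ p.1 ∧ p.1 ≤ (lam1 : ℝ) ∧ 0 ≤ p.2 ∧
        p.2 + (A : ℝ) * p.1 ≤ (lam2 : ℝ)} ∩
      {p : ℝ × ℝ | p.2 + (c : ℝ) * p.1 ≤ (lam2 : ℝ)} =
      convexHull ℝ {((0 : ℝ), (0 : ℝ)), ((lam1 : ℝ), (0 : ℝ)),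
        ((lam1 : ℝ), (lam2 : ℝ) - (c : ℝ) * (lam1 : ℝ)), ((0 : ℝ), (lam2 : ℝ))}) ∧
    ({p : ℝ × ℝ | 0 ≤ p.1 ∧ p.1 ≤ (lam1 : ℝ) ∧ 0 ≤ p.2 ∧
        p.2 + ((2 * c - A : ℤ) : ℝ) * p.1 ≤ ((lam2 + (c - A) * lam1 : ℤ) : ℝ)} ∩
      {p : ℝ × ℝ | p.2 + (c : ℝ) * p.1 ≤ (lam2 : ℝ)} =
      convexHull ℝ {((0 : ℝ), (0 : ℝ)), ((lam1 : ℝ), (0 : ℝ)),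
        ((lam1 : ℝ), (lam2 : ℝ) - (c : ℝ) * (lam1 : ℝ)), ((0 : ℝ), (lam2 : ℝ))}) := by
  have h1' : (0 : ℝ) < (lam1 : ℝ) := by exact_mod_cast h1
  have h2' : (0 : ℝ) < (lam2 : ℝ) := by exact_mod_cast h2
  have hcA' : (A : ℝ) < (c : ℝ) := by exact_mod_cast hcA
  have hc2' : (c : ℝ) * (lam1 : ℝ) < (lam2 : ℝ) := by exact_mod_cast hc2
  have key := trapezoid_hull_eq (c : ℝ) (lam1 : ℝ) (lam2 : ℝ) h1' h2' hc2'
  constructor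
  · rw [← key]
    ext p
    simp only [Set.mem_inter_iff, Set.mem_setOf_eq]
    constructor
    · rintro ⟨⟨a, b, d, _⟩, e⟩; exact ⟨a, b, d, e⟩
    · rintro ⟨a, b, d, e⟩
      exact ⟨⟨a, b, d, by nlinarith⟩, e⟩
  · rw [← key]
    ext p
    simp only [Set.mem_inter_iff, Set.mem_setOf_eq]
    push_cast
    constructor
    · rintro ⟨⟨a, b, d, _⟩, e⟩; exact ⟨a, b, d, e⟩
    · rintro ⟨a, b, d, e⟩
      exact ⟨⟨a, b, d, by nlinarith⟩, e⟩
end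

section
/- Let $A$ be a strictly upper-triangular $n \times n$ integer matrix and $\lambda \in \mathbb{R}^n$, and let $\Delta(A,\lambda) = \{p \in \mathbb{R}^n : \langle p, e_j\rangle \ge 0 \text{ and } \langle p, e_j + \sum_i A^i_j e_i\rangle \le \lambda_j \text{ for all } j\}$. For a nonempty subset $I \subseteq \{1,\dots,n\}$ define $\Xi(I) = \sum (-1)^m \lambda_{i_0} A^{i_0}_{i_1} \cdots A^{i_{m-1}}_{i_m}$, summed over chains $i_0 < \cdots < i_m = \max(I)$ with $\{i_0,\dots,i_m\} \subseteq I$. Suppose $\Xi(I) > 0$ for every nonempty $I \subseteq \{1,\dots,n\}$. Then for every $I \subseteq \{1,\dots,n\}$, the point $p_I$ determined by $\langle p_I, e_j\rangle = 0$ for $j \notin I$ and $\langle p_I, e_j + \sum_i A^i_j e_i\rangle = \lambda_j$ for $j \in I$ is a vertex of $\Delta(A,\lambda)$; moreover $\langle p_I, e_j\rangle > 0$ for $j \in I$ and $\langle p_I, e_j + \sum_i A^i_j e_i\rangle < \lambda_j$ for $j \notin I$. -/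
open Finset

/-- `Λ(J)`: for `J = {i₀ < ⋯ < i_m}`, the value `(-1)^m λ_{i₀} A^{i₀}_{i₁} ⋯ A^{i_{m-1}}_{i_m}`. -/
noncomputable def chainVal {n : ℕ} (A : Fin n → Fin n → ℤ) (lam : Fin n → ℝ)
    (J : Finset (Fin n)) : ℝ :=
  match J.sort (· ≤ ·) with
  | [] => 0
  | a :: rest =>
      (-1 : ℝ) ^ rest.length * lam a *
        (((a :: rest).zip rest).map (fun p => (A p.1 p.2 : ℝ))).prod

/-- `Ξ(I)`: sum of `Λ(J)` over nonempty `J ⊆ I` with `max J = max I`. -/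
noncomputable def XiVal {n : ℕ} (A : Fin n → Fin n → ℤ) (lam : Fin n → ℝ)
    (I : Finset (Fin n)) : ℝ :=
  ∑ J ∈ I.powerset.filter (fun J => J.max = I.max), chainVal A lam J

/-!
Grouping the chains that end at `j` by their element just below `j` gives the recursion
`Ξ({j} ∪ S) = λ_j - ∑_{i ∈ S} A^i_j Ξ({k ∈ S | k ≤ i})` for `S < j`. As `A` is strictly upper
triangular, the equations defining `p_I` are solved by forward substitution, and the recursion
turns this substitution into `p_j = Ξ({i ∈ I | i ≤ j})` for `j ∈ I`, while for `j ∉ I` the slack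
`λ_j - ⟨p_I, e_j + ∑_i A^i_j e_i⟩` equals `Ξ({j} ∪ {i ∈ I | i < j})`. Both are positive by
hypothesis. Finally, a point of `Δ(A, λ)` on which all inequalities tight at `p_I` are equalities
solves the same triangular system, hence equals `p_I`; so `p_I` is a vertex.
-/

theorem List.zip_cons_append_pair {α : Type*} (a m j : α) (l : List α) :
    (a :: (l ++ [m, j])).zip (l ++ [m, j]) = (a :: (l ++ [m])).zip (l ++ [m]) ++ [(m, j)] := by
  induction l generalizing a with
  | nil => simp
  | cons b l ih => simp [ih]

namespace Finset

variable {α : Type*} [LinearOrder α] {s : Finset α} {a : α}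

theorem sort_insert_of_forall_lt (h : ∀ b ∈ s, b < a) : (insert a s).sort = s.sort ++ [a] := by
  refine (sortedLT_sort _).eq_of_mem_iff (List.sortedLT_iff_pairwise.2 ?_) fun b => ?_
  · simpa [List.pairwise_append] using ⟨(sortedLT_sort s).pairwise, h⟩
  · simp [or_comm]

theorem max_insert_of_forall_lt (h : ∀ b ∈ s, b < a) : (insert a s).max = a := by
  rw [max_insert]
  exact max_eq_left (Finset.max_le fun b hb => WithBot.coe_le_coe.2 (h b hb).le)

theorem insert_filter_lt_eq_filter_le (ha : a ∈ s) :
    insert a (s.filter (· < a)) = s.filter (· ≤ a) := by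
  ext b
  simp only [mem_insert, mem_filter, le_iff_lt_or_eq]
  grind

end Finset

section Convex

variable {𝕜 E : Type*} [CommRing 𝕜] [LinearOrder 𝕜] [IsStrictOrderedRing 𝕜] [AddCommGroup E]
  [Module 𝕜 E]

theorem LinearMap.eq_of_le_of_mem_openSegment (φ : E →ₗ[𝕜] 𝕜) {x y z : E} {c : 𝕜}
    (hx : φ x ≤ c) (hy : φ y ≤ c) (hz : z ∈ openSegment 𝕜 x y) (hφz : φ z = c) : φ x = c := by
  obtain ⟨a, b, ha, hb, hab, rfl⟩ := hz
  simp only [map_add, map_smul, smul_eq_mul] at hφz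
  refine le_antisymm hx (not_lt.1 fun hlt => ?_)
  have hlt' := add_lt_add_of_lt_of_le (mul_lt_mul_of_pos_left hlt ha)
    (mul_le_mul_of_nonneg_left hy hb.le)
  rw [← add_mul, hab, one_mul, hφz] at hlt'
  exact lt_irrefl c hlt'

theorem mem_extremePoints_of_forall_tight_eq {ι : Type*} (φ : ι → E →ₗ[𝕜] 𝕜) (c : ι → 𝕜)
    {p : E} (hp : ∀ k, φ k p ≤ c k)
    (huniq : ∀ q, (∀ k, φ k q ≤ c k) → (∀ k, φ k p = c k → φ k q = c k) → q = p) :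
    p ∈ {q | ∀ k, φ k q ≤ c k}.extremePoints 𝕜 :=
  ⟨hp, fun x hx _ hy hseg =>
    huniq x hx fun k hk => (φ k).eq_of_le_of_mem_openSegment (hx k) (hy k) hseg hk⟩

end Convex

section Chains

variable {n : ℕ} (A : Fin n → Fin n → ℤ) (lam : Fin n → ℝ)

theorem chainVal_singleton (j : Fin n) : chainVal A lam {j} = lam j := by
  simp [chainVal]

theorem chainVal_insert_insert {J : Finset (Fin n)} {m j : Fin n} (hJ : ∀ b ∈ J, b < m)
    (hmj : m < j) :
    chainVal A lam (insert j (insert m J)) = -A m j * chainVal A lam (insert m J) := by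
  have hj : ∀ b ∈ insert m J, b < j := by
    simpa [hmj] using fun b hb => (hJ b hb).trans hmj
  unfold chainVal
  rw [sort_insert_of_forall_lt hj, sort_insert_of_forall_lt hJ]
  generalize J.sort (· ≤ ·) = L
  rcases L with _ | ⟨a, l⟩
  · simp [mul_comm]
  · simp [List.zip_cons_append_pair, pow_succ, mul_comm, mul_left_comm]

theorem XiVal_insert_eq_sum_powerset {S : Finset (Fin n)} {j : Fin n} (h : ∀ b ∈ S, b < j) :
    XiVal A lam (insert j S) = ∑ J ∈ S.powerset, chainVal A lam (insert j J) := by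
  have hj : j ∉ S := fun hj => lt_irrefl j (h j hj)
  rw [XiVal, sum_filter, sum_powerset_insert hj, max_insert_of_forall_lt h, sum_eq_zero, zero_add]
  · refine sum_congr rfl fun J hJ => if_pos (max_insert_of_forall_lt fun b hb => h b ?_)
    exact mem_powerset.1 hJ hb
  · intro J hJ
    rw [if_neg fun hmax => hj (mem_powerset.1 hJ (mem_of_max hmax))]

theorem XiVal_insert {S : Finset (Fin n)} {j : Fin n} (h : ∀ b ∈ S, b < j) :
    XiVal A lam (insert j S) = lam j - ∑ i ∈ S, A i j * XiVal A lam (S.filter (· ≤ i)) := by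
  induction S using Finset.induction_on_max with
  | empty =>
    rw [XiVal_insert_eq_sum_powerset A lam h]
    simp [chainVal_singleton]
  | insert m S hm ih =>
    have hS : ∀ b ∈ S, b < j := fun b hb => h b (mem_insert_of_mem hb)
    have hmS : m ∉ S := fun hmS => lt_irrefl m (hm m hmS)
    have hmj : m < j := h m (mem_insert_self m S)
    have hfilter : ∑ i ∈ S, A i j * XiVal A lam ((insert m S).filter (· ≤ i)) =
        ∑ i ∈ S, A i j * XiVal A lam (S.filter (· ≤ i)) :=
      sum_congr rfl fun i hi => by rw [filter_insert, if_neg (not_le.2 (hm i hi))]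
    have hall : (insert m S).filter (· ≤ m) = insert m S :=
      filter_true_of_mem fun b hb => by
        rcases mem_insert.1 hb with rfl | hb
        exacts [le_rfl, (hm b hb).le]
    rw [XiVal_insert_eq_sum_powerset A lam h, sum_powerset_insert hmS,
      ← XiVal_insert_eq_sum_powerset A lam hS, ih hS, sum_insert hmS, hall, hfilter,
      XiVal_insert_eq_sum_powerset A lam hm, mul_sum,
      sum_congr rfl fun J hJ =>
        chainVal_insert_insert A lam (fun b hb => hm b (mem_powerset.1 hJ hb)) hmj]
    simp only [neg_mul, sum_neg_distrib]
    ring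

end Chains

section TriangularSystem

variable {n : ℕ} {A : Fin n → Fin n → ℤ} {lam : Fin n → ℝ} {I : Finset (Fin n)} {p : Fin n → ℝ}

theorem sum_mul_eq_sum_filter_lt (hA : ∀ i j : Fin n, j ≤ i → A i j = 0)
    (hp0 : ∀ j ∉ I, p j = 0) (j : Fin n) :
    ∑ i, (A i j : ℝ) * p i = ∑ i ∈ I.filter (· < j), (A i j : ℝ) * p i := by
  refine (sum_subset (subset_univ _) fun i _ hi => ?_).symm
  by_cases hij : i < j
  · rw [hp0 i fun hiI => hi (mem_filter.2 ⟨hiI, hij⟩), mul_zero]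
  · rw [hA i j (not_lt.1 hij), Int.cast_zero, zero_mul]

theorem sum_mul_eq_sub_XiVal (hA : ∀ i j : Fin n, j ≤ i → A i j = 0)
    (hp0 : ∀ j ∉ I, p j = 0) {j : Fin n}
    (hbelow : ∀ i ∈ I, i < j → p i = XiVal A lam (I.filter (· ≤ i))) :
    ∑ i, (A i j : ℝ) * p i = lam j - XiVal A lam (insert j (I.filter (· < j))) := by
  rw [XiVal_insert A lam fun b hb => (mem_filter.1 hb).2, sub_sub_cancel,
    sum_mul_eq_sum_filter_lt hA hp0]
  refine sum_congr rfl fun i hi => ?_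
  obtain ⟨hiI, hij⟩ := mem_filter.1 hi
  rw [hbelow i hiI hij, filter_filter]
  congr 2
  exact filter_congr fun b _ => ⟨fun hb => ⟨hb.trans_lt hij, hb⟩, And.right⟩

theorem eq_XiVal_filter_le (hA : ∀ i j : Fin n, j ≤ i → A i j = 0)
    (hp0 : ∀ j ∉ I, p j = 0) (hp1 : ∀ j ∈ I, p j + ∑ i, (A i j : ℝ) * p i = lam j) :
    ∀ j ∈ I, p j = XiVal A lam (I.filter (· ≤ j)) := by
  intro j
  induction j using WellFoundedLT.induction with
  | _ j ih =>
    intro hj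
    have hpj := hp1 j hj
    rw [sum_mul_eq_sub_XiVal hA hp0 fun i hi hij => ih i hij hi,
      insert_filter_lt_eq_filter_le hj] at hpj
    linarith

theorem eq_of_triangular_system (hA : ∀ i j : Fin n, j ≤ i → A i j = 0)
    (hp0 : ∀ j ∉ I, p j = 0) (hp1 : ∀ j ∈ I, p j + ∑ i, (A i j : ℝ) * p i = lam j)
    {q : Fin n → ℝ} (hq0 : ∀ j ∉ I, q j = 0)
    (hq1 : ∀ j ∈ I, q j + ∑ i, (A i j : ℝ) * q i = lam j) : q = p := by
  funext j
  by_cases hj : j ∈ I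
  · rw [eq_XiVal_filter_le hA hq0 hq1 j hj, eq_XiVal_filter_le hA hp0 hp1 j hj]
  · rw [hq0 j hj, hp0 j hj]

end TriangularSystem

section Polytope

variable {n : ℕ} (A : Fin n → Fin n → ℤ) (lam : Fin n → ℝ)

def deltaFunctional : Fin n ⊕ Fin n → (Fin n → ℝ) →ₗ[ℝ] ℝ :=
  Sum.elim (fun j => -LinearMap.proj j)
    fun j => LinearMap.proj j + ∑ i, (A i j : ℝ) • LinearMap.proj i

def deltaBound : Fin n ⊕ Fin n → ℝ :=
  Sum.elim 0 lam

@[simp]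
theorem deltaFunctional_inl (j : Fin n) (q : Fin n → ℝ) : deltaFunctional A (.inl j) q = -q j :=
  rfl

@[simp]
theorem deltaFunctional_inr (j : Fin n) (q : Fin n → ℝ) :
    deltaFunctional A (.inr j) q = q j + ∑ i, (A i j : ℝ) * q i := by
  simp [deltaFunctional]

theorem setOf_eq_setOf_deltaFunctional_le :
    {q : Fin n → ℝ | ∀ j, 0 ≤ q j ∧ q j + ∑ i, (A i j : ℝ) * q i ≤ lam j} =
      {q | ∀ k, deltaFunctional A k q ≤ deltaBound lam k} := by
  ext q
  simp [Sum.forall, deltaBound, forall_and]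

end Polytope

/-- **If `Ξ(I) > 0` for all nonempty `I`, then each point `p_I` is a vertex of `Δ(A,λ)`
with strict slack in the non-defining inequalities.** -/
theorem pI_is_vertex {n : ℕ} (A : Fin n → Fin n → ℤ)
    (hA : ∀ i j : Fin n, j ≤ i → A i j = 0) (lam : Fin n → ℝ)
    (hXi : ∀ I : Finset (Fin n), I.Nonempty → 0 < XiVal A lam I)
    (I : Finset (Fin n)) (p : Fin n → ℝ)
    (hp0 : ∀ j ∉ I, p j = 0)
    (hp1 : ∀ j ∈ I, p j + ∑ i, (A i j : ℝ) * p i = lam j) :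
    p ∈ Set.extremePoints ℝ
        {q : Fin n → ℝ | ∀ j, 0 ≤ q j ∧ q j + ∑ i, (A i j : ℝ) * q i ≤ lam j} ∧
    (∀ j ∈ I, 0 < p j) ∧
    (∀ j ∉ I, p j + ∑ i, (A i j : ℝ) * p i < lam j) := by
  have hpI := eq_XiVal_filter_le hA hp0 hp1
  have hpos : ∀ j ∈ I, 0 < p j := fun j hj => hpI j hj ▸ hXi _ ⟨j, mem_filter.2 ⟨hj, le_rfl⟩⟩
  have hslack : ∀ j ∉ I, p j + ∑ i, (A i j : ℝ) * p i < lam j := fun j hj => by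
    rw [hp0 j hj, zero_add, sum_mul_eq_sub_XiVal hA hp0 fun i hi _ => hpI i hi]
    linarith [hXi (insert j (I.filter (· < j))) (insert_nonempty _ _)]
  have hmem : ∀ j, 0 ≤ p j ∧ p j + ∑ i, (A i j : ℝ) * p i ≤ lam j := fun j => by
    by_cases hj : j ∈ I
    · exact ⟨(hpos j hj).le, (hp1 j hj).le⟩
    · exact ⟨(hp0 j hj).ge, (hslack j hj).le⟩
  refine ⟨?_, hpos, hslack⟩
  rw [setOf_eq_setOf_deltaFunctional_le]
  refine mem_extremePoints_of_forall_tight_eq _ _ ?_ fun q _ hq => ?_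
  · rintro (j | j)
    · simpa [deltaBound] using (hmem j).1
    · simpa [deltaBound] using (hmem j).2
  · refine eq_of_triangular_system hA hp0 hp1 (fun j hj => ?_) fun j hj => ?_
    · simpa [deltaBound] using hq (.inl j) (by simp [deltaBound, hp0 j hj])
    · simpa [deltaBound] using hq (.inr j) (by simp [deltaBound, hp1 j hj])
end

section
/- Let $H^*(M) = \mathbb{Z}[x_1,\dots,x_n]/(x_i^2 + \sum_j A^i_j x_i x_j)$ and $H^*(\tilde M) = \mathbb{Z}[\tilde x_1,\dots,\tilde x_n]/(\tilde x_i^2 + \sum_j \tilde A^i_j \tilde x_i \tilde x_j)$ for distinct strictly upper-triangular integer matrices $A \ne \tilde A$, and fix $1 \le k < \ell \le n$. Then there exists an integer $\gamma$ and a ring isomorphism $H^*(M) \to H^*(\tilde M)$ sending $x_k \mapsto \tilde x_k - \gamma \tilde x_\ell$ and $x_i \mapsto \tilde x_i$ for $i \ne k$ if and only if: $\tilde A^k_\ell \equiv A^k_\ell \pmod 2$; $\tilde A^i_\ell = A^i_\ell - \tfrac{1}{2} A^i_k (A^k_\ell - \tilde A^k_\ell)$ for all $i \ne k$; $\tilde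 A^i_j = A^i_j$ for all $i$ and all $j \ne \ell$; and $A^k_j = \tfrac{1}{2}(A^k_\ell + \tilde A^k_\ell) A^\ell_j$ for all $j \ne \ell$. In that case necessarily $\gamma = \tfrac{1}{2}(A^k_\ell - \tilde A^k_\ell)$. -/
open MvPolynomial

/-- The ideal of relations `x_i² + ∑_j A^i_j x_i x_j` of a Bott manifold's cohomology. -/
noncomputable def bottIdeal (n : ℕ) (A : Fin n → Fin n → ℤ) :
    Ideal (MvPolynomial (Fin n) ℤ) :=
  Ideal.span (Set.range fun i : Fin n =>
    X i ^ 2 + ∑ j : Fin n, C (A i j) * X i * X j)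

/-- The integral cohomology ring `ℤ[x₁,…,x_n]/(x_i² + ∑_j A^i_j x_i x_j)`. -/
abbrev BottRing (n : ℕ) (A : Fin n → Fin n → ℤ) :=
  MvPolynomial (Fin n) ℤ ⧸ bottIdeal n A

/-- The generator `x_i` of `BottRing n A`. -/
noncomputable def bx (n : ℕ) (A : Fin n → Fin n → ℤ) (i : Fin n) : BottRing n A :=
  Ideal.Quotient.mk (bottIdeal n A) (X i)

/-!
The substitution `x_k ↦ x_k - γ x_ℓ` is an automorphism of `ℤ[x]`, with inverse the substitution
for `-γ`. A ring map with the prescribed values on the generators is induced by it, so it exists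
iff the substitution carries every relation of `A` into the ideal of `Ã`; it is an isomorphism
as soon as the substitution for `-γ` carries the relations of `Ã` back.

The relations are homogeneous quadrics, so a sheared relation of `A` lying in the ideal of `Ã`
is a `ℤ`-linear combination of the relations of `Ã`. Evaluating at the points `e_a` and
`e_a + e_b` determines the coefficients and yields linear conditions on the entries: for `i ≠ k`
the sheared `i`-th relation is the `i`-th relation of `Ã`, and the sheared `k`-th relation is
the `k`-th one plus `γ² - γ A^k_ℓ` times the `ℓ`-th one. As `A ≠ Ã` forces `γ ≠ 0`, the factor
`γ` can be cancelled in the last condition. Conversely these conditions make both identities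
hold, and they are invariant under `(A, Ã, γ) ↦ (Ã, A, -γ)`.
-/

namespace MvPolynomial

variable {σ R : Type*} [CommRing R]

theorem homogeneousComponent_mul_of_isHomogeneous {d : ℕ} {p : MvPolynomial σ R}
    (q : MvPolynomial σ R) (hp : p.IsHomogeneous d) :
    homogeneousComponent d (q * p) = C (coeff 0 q) * p := by
  conv_lhs => rw [← sum_homogeneousComponent q]
  rw [Finset.sum_mul, map_sum, Finset.sum_eq_single_of_mem 0 (by simp)]
  · have h0 := (homogeneousComponent_isHomogeneous 0 q).mul hp
    rw [zero_add] at h0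
    rw [homogeneousComponent_eq_self h0, homogeneousComponent_zero]
  · intro e _ he
    exact homogeneousComponent_of_mem ((homogeneousComponent_isHomogeneous e q).mul hp)
      |>.trans (if_neg (by omega))

theorem exists_eq_sum_C_mul_of_mem_span {ι : Type*} [Fintype ι] {d : ℕ}
    {g : ι → MvPolynomial σ R} (hg : ∀ i, (g i).IsHomogeneous d) {p : MvPolynomial σ R}
    (hp : p.IsHomogeneous d) (hmem : p ∈ Ideal.span (Set.range g)) :
    ∃ c : ι → R, p = ∑ i, C (c i) * g i := by
  obtain ⟨q, rfl⟩ := (Submodule.mem_span_range_iff_exists_fun _).1 hmem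
  refine ⟨fun i => coeff 0 (q i), ?_⟩
  rw [← homogeneousComponent_eq_self hp, map_sum]
  exact Finset.sum_congr rfl fun i _ => homogeneousComponent_mul_of_isHomogeneous _ (hg i)

section Shear

variable [DecidableEq σ]

noncomputable def shear (γ : R) (k l : σ) : MvPolynomial σ R →ₐ[R] MvPolynomial σ R :=
  bind₁ (X - Pi.single k (C γ * X l))

variable {γ : R} {k l : σ}

@[simp]
theorem shear_X_self : shear γ k l (X k) = X k - C γ * X l := by
  simp [shear]

@[simp]
theorem shear_X_of_ne {j : σ} (hj : j ≠ k) : shear γ k l (X j) = X j := by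
  simp [shear, hj]

theorem shear_neg_comp_shear (hkl : k ≠ l) :
    (shear (-γ) k l).comp (shear γ k l) = AlgHom.id R (MvPolynomial σ R) := by
  ext j : 1
  by_cases hj : j = k
  · subst hj; simp [hkl.symm]
  · simp [hj]

noncomputable def shearEquiv (γ : R) (hkl : k ≠ l) : MvPolynomial σ R ≃ₐ[R] MvPolynomial σ R :=
  AlgEquiv.ofAlgHom (shear γ k l) (shear (-γ) k l)
    (by simpa using shear_neg_comp_shear (γ := -γ) hkl) (shear_neg_comp_shear hkl)

theorem eval_shear (v : σ → R) (p : MvPolynomial σ R) :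
    eval v (shear γ k l p) = eval (v - Pi.single k (γ * v l)) p := by
  simp only [← coe_aeval_eq_eval, RingHom.coe_coe, shear, aeval_bind₁]
  congr 1
  ext j
  by_cases hj : j = k
  · subst hj; simp
  · simp [hj]

theorem IsHomogeneous.shear {d : ℕ} {p : MvPolynomial σ R} (hp : p.IsHomogeneous d) :
    (shear γ k l p).IsHomogeneous d := by
  have hX : ∀ j, ((X - Pi.single k (C γ * X l) : σ → MvPolynomial σ R) j).IsHomogeneous 1 := by
    intro j
    by_cases hj : j = k
    · subst hj; simpa using (isHomogeneous_X R j).sub (isHomogeneous_C_mul_X γ l)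
    · simpa [hj] using isHomogeneous_X R j
  simpa [MvPolynomial.shear] using hp.aeval _ hX

end Shear

end MvPolynomial

theorem dotProduct_eq_add_of_forall_ne {ι R : Type*} [Fintype ι] [DecidableEq ι] [Ring R]
    {b b' : ι → R} {l : ι} (h : ∀ j ≠ l, b j = b' j) (v : ι → R) :
    b ⬝ᵥ v = b' ⬝ᵥ v + (b l - b' l) * v l := by
  have hb : b = b' + Pi.single l (b l - b' l) := by
    funext j
    by_cases hjl : j = l
    · subst hjl; simp
    · simp [h j hjl, hjl]
  conv_lhs => rw [hb, add_dotProduct, single_dotProduct]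

namespace BottRing

variable {n : ℕ}

noncomputable def rel (A : Fin n → Fin n → ℤ) (i : Fin n) : MvPolynomial (Fin n) ℤ :=
  X i ^ 2 + ∑ j : Fin n, C (A i j) * X i * X j

variable {A At : Fin n → Fin n → ℤ}

theorem bottIdeal_eq_span : bottIdeal n A = Ideal.span (Set.range (rel A)) := rfl

theorem rel_mem_bottIdeal (i : Fin n) : rel A i ∈ bottIdeal n A :=
  Ideal.subset_span ⟨i, rfl⟩

theorem rel_isHomogeneous (i : Fin n) : (rel A i).IsHomogeneous 2 :=
  ((isHomogeneous_X ℤ i).pow 2).add <| IsHomogeneous.sum _ _ _ fun j _ =>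
    ((isHomogeneous_C_mul_X (A i j) i).mul (isHomogeneous_X ℤ j))

theorem eval_rel (v : Fin n → ℤ) (i : Fin n) : eval v (rel A i) = v i * (v i + A i ⬝ᵥ v) := by
  simp only [rel, map_add, map_sum, map_mul, eval_C, eval_X, dotProduct, mul_add,
    Finset.mul_sum, mul_assoc, mul_left_comm (v i), sq]

theorem eval_single_sum_C_mul_rel (hA : ∀ m, A m m = 0) (c : Fin n → ℤ) (a : Fin n) :
    eval (Pi.single a 1) (∑ m, C (c m) * rel A m) = c a := by
  simp only [map_sum, map_mul, eval_C, eval_rel, dotProduct_single, mul_one]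
  rw [Fintype.sum_eq_single a fun m hm => by simp [hm]]
  simp [hA]

theorem eval_single_add_single_sum_C_mul_rel (hA : ∀ m, A m m = 0) (c : Fin n → ℤ) {a b : Fin n}
    (hab : a ≠ b) :
    eval (Pi.single a 1 + Pi.single b 1) (∑ m, C (c m) * rel A m)
      = c a * (1 + A a b) + c b * (1 + A b a) := by
  simp only [map_sum, map_mul, eval_C, eval_rel, dotProduct_add, dotProduct_single, mul_one]
  rw [Fintype.sum_eq_add a b hab fun m hm => by simp [hm.1, hm.2]]
  simp [hA, hab, hab.symm]

theorem eq_row_of_forall_eval (hA : ∀ m, A m m = 0) {b : Fin n → ℤ} {i : Fin n} (hb : b i = 0)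
    (c : Fin n → ℤ) (h : ∀ v, v i * (v i + b ⬝ᵥ v) = eval v (∑ m, C (c m) * rel A m)) :
    b = A i := by
  funext j
  by_cases hji : j = i
  · rw [hji, hb, hA]
  have hci : c i = 1 := by rw [← eval_single_sum_C_mul_rel hA c i, ← h]; simp [hb]
  have hcj : c j = 0 := by rw [← eval_single_sum_C_mul_rel hA c j, ← h]; simp [Ne.symm hji]
  have hij := eval_single_add_single_sum_C_mul_rel hA c (Ne.symm hji)
  rw [← h, hci, hcj] at hij
  simpa [hb, Ne.symm hji] using hij

theorem row_conditions_of_forall_eval_sheared (hA : ∀ m, A m m = 0) {k l : Fin n}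
    (hlk : A l k = 0) (hkl : k ≠ l) {a : Fin n → ℤ} (ha : a k = 0) (γ : ℤ) (c : Fin n → ℤ)
    (h : ∀ v, (v k - γ * v l) * (v k - γ * v l + a ⬝ᵥ v) = eval v (∑ m, C (c m) * rel A m)) :
    A k l = a l - 2 * γ ∧ ∀ j, j ≠ k → j ≠ l → A k j = a j ∧ γ * a j = γ * ((a l - γ) * A l j) := by
  have hck : c k = 1 := by rw [← eval_single_sum_C_mul_rel hA c k, ← h]; simp [ha, hkl]
  have hcl : c l = γ * γ - γ * a l := by
    rw [← eval_single_sum_C_mul_rel hA c l, ← h]; simp [hkl.symm]; ring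
  have hkl' := eval_single_add_single_sum_C_mul_rel hA c hkl
  rw [← h, hck, hcl] at hkl'
  refine ⟨by simp [ha, hkl, hkl.symm, hlk] at hkl'; linear_combination -hkl', fun j hjk hjl => ?_⟩
  have hcj : c j = 0 := by
    rw [← eval_single_sum_C_mul_rel hA c j, ← h]; simp [hjk.symm, hjl.symm]
  have hkj := eval_single_add_single_sum_C_mul_rel hA c (Ne.symm hjk)
  have hlj := eval_single_add_single_sum_C_mul_rel hA c (Ne.symm hjl)
  rw [← h, hck, hcj] at hkj
  rw [← h, hcl, hcj] at hlj
  constructor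
  · simp [ha, hkl, hjk.symm, hjl.symm] at hkj; linarith
  · simp [hkl, hjk.symm, hjl.symm] at hlj; linear_combination -hlj

theorem eval_shear_rel_of_ne (γ : ℤ) {k : Fin n} (l : Fin n) (v : Fin n → ℤ) {i : Fin n}
    (hik : i ≠ k) :
    eval v (shear γ k l (rel A i)) = v i * (v i + (A i ⬝ᵥ v - γ * A i k * v l)) := by
  rw [eval_shear, eval_rel, dotProduct_sub, dotProduct_single]
  simp only [Pi.sub_apply, Pi.single_eq_of_ne hik, sub_zero]
  ring

theorem eval_shear_rel_self (γ : ℤ) {k : Fin n} (l : Fin n) (v : Fin n → ℤ) (hA : A k k = 0) :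
    eval v (shear γ k l (rel A k)) = (v k - γ * v l) * (v k - γ * v l + A k ⬝ᵥ v) := by
  rw [eval_shear, eval_rel, dotProduct_sub, dotProduct_single, hA]
  simp

theorem map_shear_bottIdeal_le {γ : ℤ} {k l : Fin n}
    (h : ∀ i, shear γ k l (rel A i) ∈ bottIdeal n At) :
    (bottIdeal n A).map (shear γ k l) ≤ bottIdeal n At := by
  rw [bottIdeal_eq_span, Ideal.map_span, Ideal.span_le]
  rintro _ ⟨_, ⟨i, rfl⟩, rfl⟩
  exact h i

structure ShearCompatible (A At : Fin n → Fin n → ℤ) (γ : ℤ) (k l : Fin n) : Prop where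
  apex : At k l = A k l - 2 * γ
  column : ∀ i ≠ k, At i l = A i l - γ * A i k
  off_column : ∀ i, ∀ j ≠ l, At i j = A i j
  row : ∀ j ≠ l, A k j = (A k l - γ) * A l j

namespace ShearCompatible

variable {γ : ℤ} {k l : Fin n}

theorem two_mul_eq (h : ShearCompatible A At γ k l) : 2 * γ = A k l - At k l := by
  linarith [h.apex]

theorem symm (h : ShearCompatible A At γ k l) (hkl : k ≠ l) : ShearCompatible At A (-γ) k l where
  apex := by linarith [h.apex]
  column i hik := by rw [h.column i hik, h.off_column i k hkl]; ring
  off_column i j hjl := (h.off_column i j hjl).symm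
  row j hjl := by rw [h.off_column k j hjl, h.off_column l j hjl, h.apex, h.row j hjl]; ring

theorem shear_rel_mem (h : ShearCompatible A At γ k l) (hA : ∀ i, A i i = 0)
    (hAt : ∀ i, At i i = 0) (i : Fin n) : shear γ k l (rel A i) ∈ bottIdeal n At := by
  by_cases hik : i = k
  · subst hik
    have hk : ∀ v, At i ⬝ᵥ v = A i ⬝ᵥ v - 2 * γ * v l := fun v => by
      rw [dotProduct_eq_add_of_forall_ne (h.off_column i) v, h.apex]; ring
    have hl : ∀ v, At l ⬝ᵥ v = A l ⬝ᵥ v := fun v => by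
      rw [dotProduct_eq_add_of_forall_ne (h.off_column l) v, hAt, hA]; ring
    have hrow : ∀ v, A i ⬝ᵥ v = (A i l - γ) * A l ⬝ᵥ v + A i l * v l := fun v => by
      rw [dotProduct_eq_add_of_forall_ne (b' := (A i l - γ) • A l) h.row v, smul_dotProduct]
      simp [hA]
    have hrel : shear γ i l (rel A i) = rel At i + C (γ * γ - γ * A i l) * rel At l := by
      refine MvPolynomial.funext fun v => ?_
      rw [eval_shear_rel_self γ l v (hA i), map_add, map_mul, eval_C, eval_rel, eval_rel, hk, hl,
        hrow]
      ring
    rw [hrel]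
    exact Ideal.add_mem _ (rel_mem_bottIdeal i) (Ideal.mul_mem_left _ _ (rel_mem_bottIdeal l))
  · have hrel : shear γ k l (rel A i) = rel At i := by
      refine MvPolynomial.funext fun v => ?_
      rw [eval_shear_rel_of_ne γ l v hik, eval_rel,
        dotProduct_eq_add_of_forall_ne (h.off_column i) v, h.column i hik]
      ring
    rw [hrel]
    exact rel_mem_bottIdeal i

theorem map_shearEquiv (h : ShearCompatible A At γ k l) (hA : ∀ i, A i i = 0)
    (hAt : ∀ i, At i i = 0) (hkl : k ≠ l) :
    bottIdeal n At = (bottIdeal n A).map ((shearEquiv γ hkl).toRingEquiv : _ →+* _) := by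
  refine le_antisymm ?_ (map_shear_bottIdeal_le (h.shear_rel_mem hA hAt))
  rw [Ideal.map_comap_of_equiv, ← Ideal.map_le_iff_le_comap]
  exact map_shear_bottIdeal_le ((h.symm hkl).shear_rel_mem hAt hA)

theorem exists_ringEquiv (h : ShearCompatible A At γ k l) (hA : ∀ i, A i i = 0)
    (hAt : ∀ i, At i i = 0) (hkl : k ≠ l) :
    ∃ F : BottRing n A ≃+* BottRing n At,
      F (bx n A k) = bx n At k - (γ : BottRing n At) * bx n At l ∧
        ∀ i ≠ k, F (bx n A i) = bx n At i :=
  ⟨Ideal.quotientEquiv _ _ (shearEquiv γ hkl).toRingEquiv (h.map_shearEquiv hA hAt hkl),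
    by simp [bx, shearEquiv], fun i hik => by simp [bx, shearEquiv, hik]⟩

end ShearCompatible

theorem exists_shearCompatible_iff {k l : Fin n} :
    (∃ γ, ShearCompatible A At γ k l) ↔
      (2 ∣ (A k l - At k l)) ∧
        (∀ i ≠ k, 2 * At i l = 2 * A i l - A i k * (A k l - At k l)) ∧
        (∀ i : Fin n, ∀ j ≠ l, At i j = A i j) ∧
        (∀ j ≠ l, 2 * A k j = (A k l + At k l) * A l j) := by
  constructor
  · rintro ⟨γ, h⟩
    refine ⟨⟨γ, by linarith [h.apex]⟩, fun i hik => ?_, h.off_column, fun j hjl => ?_⟩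
    · rw [h.column i hik, h.apex]; ring
    · rw [h.row j hjl, h.apex]; ring
  · rintro ⟨⟨γ, hγ⟩, hcol, hoff, hrow⟩
    refine ⟨γ, by linarith, fun i hik => ?_, hoff, fun j hjl => ?_⟩
    · have := hcol i hik
      rw [hγ] at this
      linarith
    · have := hrow j hjl
      rw [show At k l = A k l - 2 * γ by linarith] at this
      linarith

theorem shear_rel_mem_of_ringHom {γ : ℤ} {k l : Fin n} (F : BottRing n A →+* BottRing n At)
    (hFk : F (bx n A k) = bx n At k - (γ : BottRing n At) * bx n At l)
    (hFi : ∀ i ≠ k, F (bx n A i) = bx n At i) (i : Fin n) :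
    shear γ k l (rel A i) ∈ bottIdeal n At := by
  have hF : F.comp (Ideal.Quotient.mk _) = (Ideal.Quotient.mk _).comp (shear γ k l).toRingHom := by
    refine MvPolynomial.ringHom_ext (fun r => by simp) fun j => ?_
    by_cases hj : j = k
    · subst hj; simpa [bx] using hFk
    · simpa [bx, hj] using hFi j hj
  rw [← Ideal.Quotient.eq_zero_iff_mem]
  simpa [Ideal.Quotient.eq_zero_iff_mem.2 (rel_mem_bottIdeal i)] using
    (RingHom.congr_fun hF (rel A i)).symm

theorem row_eq_of_shear_rel_mem {γ : ℤ} {k l : Fin n} (hA : ∀ i, A i i = 0)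
    (hAt : ∀ i, At i i = 0) (hlk : A l k = 0) {i : Fin n} (hik : i ≠ k)
    (h : shear γ k l (rel A i) ∈ bottIdeal n At) : At i = A i - Pi.single l (γ * A i k) := by
  obtain ⟨c, hc⟩ := exists_eq_sum_C_mul_of_mem_span rel_isHomogeneous (rel_isHomogeneous i).shear h
  refine (eq_row_of_forall_eval hAt ?_ c fun v => ?_).symm
  · by_cases hil : i = l
    · subst hil; simp [hA, hlk]
    · simp [hA, Pi.single_eq_of_ne hil]
  · rw [← hc, eval_shear_rel_of_ne γ l v hik, sub_dotProduct, single_dotProduct]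

theorem shearCompatible_of_shear_rel_mem {γ : ℤ} {k l : Fin n} (hA : ∀ i, A i i = 0)
    (hAt : ∀ i, At i i = 0) (hlk : A l k = 0) (hkl : k ≠ l) (hne : A ≠ At)
    (h : ∀ i, shear γ k l (rel A i) ∈ bottIdeal n At) : ShearCompatible A At γ k l := by
  have hrow : ∀ i ≠ k, At i = A i - Pi.single l (γ * A i k) := fun i hik =>
    row_eq_of_shear_rel_mem hA hAt hlk hik (h i)
  have hcol : ∀ i ≠ k, At i l = A i l - γ * A i k := fun i hik => by simp [hrow i hik]
  have hoff_ne : ∀ i ≠ k, ∀ j ≠ l, At i j = A i j := fun i hik j hjl => by simp [hrow i hik, hjl]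
  obtain ⟨c, hc⟩ :=
    exists_eq_sum_C_mul_of_mem_span rel_isHomogeneous (rel_isHomogeneous k).shear (h k)
  have hlk' : At l k = 0 := by rw [hoff_ne l hkl.symm k hkl, hlk]
  obtain ⟨hapex, hk⟩ := row_conditions_of_forall_eval_sheared hAt hlk' hkl (hA k) γ c fun v => by
    rw [← hc, eval_shear_rel_self γ l v (hA k)]
  have hoff : ∀ i, ∀ j ≠ l, At i j = A i j := by
    intro i j hjl
    by_cases hik : i = k
    · subst hik
      by_cases hji : j = i
      · rw [hji, hA, hAt]
      · exact (hk j hji hjl).1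
    · exact hoff_ne i hik j hjl
  have hγ : γ ≠ 0 := by
    rintro rfl
    refine hne (funext fun i => funext fun j => ?_)
    by_cases hjl : j = l
    · subst hjl
      by_cases hik : i = k
      · subst hik; linarith
      · simp [hcol i hik]
    · exact (hoff i j hjl).symm
  refine ⟨hapex, hcol, hoff, fun j hjl => ?_⟩
  by_cases hjk : j = k
  · rw [hjk, hA, hlk, mul_zero]
  · have := (hk j hjk hjl).2
    rw [hoff l j hjl] at this
    exact mul_left_cancel₀ hγ this

end BottRing

/-- **Criterion for the isomorphism `x_k ↦ x̃_k - γ x̃_ℓ`, `x_i ↦ x̃_i` (`i ≠ k`):**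
it exists iff `Ã^k_ℓ ≡ A^k_ℓ (mod 2)`, `Ã^i_ℓ = A^i_ℓ - ½ A^i_k (A^k_ℓ - Ã^k_ℓ)` for `i ≠ k`,
`Ã^i_j = A^i_j` for `j ≠ ℓ`, and `A^k_j = ½(A^k_ℓ + Ã^k_ℓ) A^ℓ_j` for `j ≠ ℓ`; and then
necessarily `γ = ½(A^k_ℓ - Ã^k_ℓ)`. -/
theorem bott_iso_criterion (n : ℕ) (A At : Fin n → Fin n → ℤ)
    (hA : ∀ i j : Fin n, j ≤ i → A i j = 0)
    (hAt : ∀ i j : Fin n, j ≤ i → At i j = 0)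
    (hne : A ≠ At) (k l : Fin n) (hkl : k < l) :
    ((∃ (γ : ℤ) (F : BottRing n A ≃+* BottRing n At),
        F (bx n A k) = bx n At k - (γ : BottRing n At) * bx n At l ∧
        ∀ i ≠ k, F (bx n A i) = bx n At i) ↔
      ((2 ∣ (A k l - At k l)) ∧
        (∀ i ≠ k, 2 * At i l = 2 * A i l - A i k * (A k l - At k l)) ∧
        (∀ i : Fin n, ∀ j ≠ l, At i j = A i j) ∧
        (∀ j ≠ l, 2 * A k j = (A k l + At k l) * A l j))) ∧
    (∀ (γ : ℤ) (F : BottRing n A ≃+* BottRing n At),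
      (F (bx n A k) = bx n At k - (γ : BottRing n At) * bx n At l ∧
        ∀ i ≠ k, F (bx n A i) = bx n At i) →
      2 * γ = A k l - At k l) := by
  have hAd : ∀ i, A i i = 0 := fun i => hA i i le_rfl
  have hAtd : ∀ i, At i i = 0 := fun i => hAt i i le_rfl
  have compatible : ∀ (γ : ℤ) (F : BottRing n A ≃+* BottRing n At),
      F (bx n A k) = bx n At k - (γ : BottRing n At) * bx n At l →
      (∀ i ≠ k, F (bx n A i) = bx n At i) → BottRing.ShearCompatible A At γ k l :=
    fun γ F hFk hFi => BottRing.shearCompatible_of_shear_rel_mem hAd hAtd (hA l k hkl.le)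
      hkl.ne hne (BottRing.shear_rel_mem_of_ringHom F.toRingHom hFk hFi)
  refine ⟨⟨fun ⟨γ, F, hFk, hFi⟩ => ?_, fun h => ?_⟩,
    fun γ F ⟨hFk, hFi⟩ => (compatible γ F hFk hFi).two_mul_eq⟩
  · exact BottRing.exists_shearCompatible_iff.1 ⟨γ, compatible γ F hFk hFi⟩
  · obtain ⟨γ, hγ⟩ := BottRing.exists_shearCompatible_iff.2 h
    exact ⟨γ, hγ.exists_ringEquiv hAd hAtd hkl.ne⟩
end

section
/- Let $H = \mathbb{Z}[x_1,\dots,x_n]/(x_1^2 - x_1 x_n,\dots,x_{n-1}^2 - x_{n-1} x_n, x_n^2)$. The primitive elements $u$ of the degree-2 part of $H$ (a free $\mathbb{Z}$-module with basis $x_1,\dots,x_n$) satisfying $u^2 = 0$ are exactly $\pm x_n$ and $\pm(2x_i - x_n)$ for $1 \le i \le n-1$; in particular there are exactly $2n$ of them. -/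
open MvPolynomial

/-- The relations `x_i² - x_i x_n` (`i < n`) and `x_n²` of `H^*(𝓗_n; ℤ)`,
with generators indexed by `Fin (n+1)` and `x_n` the last generator. -/
noncomputable def Hrel (n : ℕ) (i : Fin (n + 1)) : MvPolynomial (Fin (n + 1)) ℤ :=
  if i = Fin.last n then X i ^ 2 else X i ^ 2 - X i * X (Fin.last n)

/-- `H = ℤ[x₁,…,x_n]/(x_i² - x_i x_n, x_n²)`. -/
abbrev HRing (n : ℕ) := MvPolynomial (Fin (n + 1)) ℤ ⧸ Ideal.span (Set.range (Hrel n))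

/-- The class `x_i` in `HRing n`. -/
noncomputable def hx (n : ℕ) (i : Fin (n + 1)) : HRing n :=
  Ideal.Quotient.mk _ (X i)

/-! Sending `x_i ↦ δ`, `x_j ↦ ε` (all other generators to `0`), resp. `x_i ↦ δ + ε`,
`x_n ↦ 2ε`, respects the relations of `H` with values in `ℤ[δ, ε]/(δ², ε²)` (below `ℤ[ε][ε]`,
`δ = inl ε`), where `δε` spans a free summand. Under these maps `u² = 0` becomes `u_i u_j = 0`
for distinct `i, j < n` and `u_i (u_i + 2 u_n) = 0` for `i < n`. So every `u_i` with `i < n` is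
`0` or `-2 u_n`, at most one of them is nonzero, `u_n` divides all coordinates, and primitivity
forces `u_n = ±1`. -/

section Primitive

variable {ι : Type*} [Fintype ι] {u : ι → ℤ}

lemma eq_one_or_neg_one_of_forall_dvd_of_gcd_eq_one (hu : Finset.univ.gcd u = 1) {c : ℤ}
    (hc : ∀ k, c ∣ u k) : c = 1 ∨ c = -1 :=
  Int.isUnit_iff.mp <| isUnit_of_dvd_one <| hu ▸ Finset.dvd_gcd fun k _ => hc k

lemma ne_zero_and_gcd_eq_one_of_eq_one_or_neg_one {k : ι} (hk : u k = 1 ∨ u k = -1) :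
    u ≠ 0 ∧ Finset.univ.gcd u = 1 := by
  refine ⟨fun h0 => by simp [h0] at hk, ?_⟩
  rw [← Finset.normalize_gcd, normalize_eq_one]
  refine isUnit_of_dvd_one ?_
  have := Finset.gcd_dvd (f := u) (Finset.mem_univ k)
  rcases hk with hk | hk <;> simpa [hk] using this

end Primitive

namespace DualNumber

open TrivSqZeroExt

lemma inl_eps_pow_two : (inl ε : ℤ[ε][ε]) ^ 2 = 0 := by
  rw [sq, ← inl_mul, eps_mul_eps, inl_zero]

lemma eq_zero_of_intCast_mul_inl_eps_mul_eps {k : ℤ}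
    (h : (k : ℤ[ε][ε]) * (inl ε * ε) = 0) : k = 0 := by
  simpa [DualNumber.snd_mul, fst_eps, snd_eps] using congrArg (fun x => x.snd.snd) h

end DualNumber

namespace HRing

variable {n : ℕ}

lemma hx_sq_of_ne_last {i : Fin (n + 1)} (hi : i ≠ Fin.last n) :
    hx n i ^ 2 = hx n i * hx n (Fin.last n) := by
  have h : Ideal.Quotient.mk _ (Hrel n i) = (0 : HRing n) :=
    Ideal.Quotient.eq_zero_iff_mem.mpr (Ideal.subset_span ⟨i, rfl⟩)
  rw [Hrel, if_neg hi, map_sub, map_mul, map_pow] at h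
  exact sub_eq_zero.mp h

lemma hx_last_sq : hx n (Fin.last n) ^ 2 = 0 := by
  have h : Ideal.Quotient.mk _ (Hrel n (Fin.last n)) = (0 : HRing n) :=
    Ideal.Quotient.eq_zero_iff_mem.mpr (Ideal.subset_span ⟨Fin.last n, rfl⟩)
  rwa [Hrel, if_pos rfl, map_pow] at h

section Lift

variable {R : Type*} [CommRing R] (v : Fin (n + 1) → R)
  (hv : ∀ i, i ≠ Fin.last n → v i ^ 2 = v i * v (Fin.last n))
  (hlast : v (Fin.last n) ^ 2 = 0)

noncomputable def lift : HRing n →+* R :=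
  Ideal.Quotient.lift _ (eval₂Hom (Int.castRingHom R) v) fun _ hp =>
    RingHom.mem_ker.mp <| (Ideal.span_le (I := RingHom.ker _)).mpr (by
      rintro _ ⟨i, rfl⟩
      by_cases hi : i = Fin.last n
      · simp [Hrel, hi, hlast]
      · simp [Hrel, hi, hv i hi]) hp

@[simp]
lemma lift_hx (i : Fin (n + 1)) : lift v hv hlast (hx n i) = v i := by
  rw [lift, hx, Ideal.Quotient.lift_mk, eval₂Hom_X']

end Lift

lemma sq_sum_intCast_mul_eq_zero {R : Type*} [CommRing R] (v : Fin (n + 1) → R)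
    (hv : ∀ i, i ≠ Fin.last n → v i ^ 2 = v i * v (Fin.last n))
    (hlast : v (Fin.last n) ^ 2 = 0) {u : Fin (n + 1) → ℤ}
    (h : (∑ i : Fin (n + 1), (u i : HRing n) * hx n i) ^ 2 = 0) :
    (∑ i : Fin (n + 1), (u i : R) * v i) ^ 2 = 0 := by
  simpa [map_sum] using congrArg (lift v hv hlast) h

variable {u : Fin (n + 1) → ℤ}

section Coefficients

open DualNumber TrivSqZeroExt

lemma mul_eq_zero_of_sq_sum_eq_zero
    (h : (∑ i : Fin (n + 1), (u i : HRing n) * hx n i) ^ 2 = 0)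
    {i j : Fin (n + 1)} (hij : i ≠ j) (hi : i ≠ Fin.last n) (hj : j ≠ Fin.last n) :
    u i * u j = 0 := by
  let v : Fin (n + 1) → ℤ[ε][ε] := fun k => if k = i then inl ε else if k = j then ε else 0
  have hv_last : v (Fin.last n) = 0 := by simp [v, hi.symm, hj.symm]
  have hv : ∀ k, k ≠ Fin.last n → v k ^ 2 = v k * v (Fin.last n) := by
    intro k _
    simp only [v, hv_last, mul_zero]
    split_ifs
    exacts [inl_eps_pow_two, eps_pow_two, zero_pow two_ne_zero]
  have key := sq_sum_intCast_mul_eq_zero v hv (by simp [hv_last]) h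
  rw [Fintype.sum_eq_add i j hij fun k hk => by simp [v, hk.1, hk.2]] at key
  simp only [v, if_neg hij.symm, ite_true] at key
  have : ((2 * u i * u j : ℤ) : ℤ[ε][ε]) * (inl ε * ε) = 0 := by
    push_cast
    linear_combination key - (u i : ℤ[ε][ε]) ^ 2 * inl_eps_pow_two -
      (u j : ℤ[ε][ε]) ^ 2 * eps_pow_two (R := ℤ[ε])
  have := eq_zero_of_intCast_mul_inl_eps_mul_eps this
  linarith

lemma mul_add_two_mul_eq_zero_of_sq_sum_eq_zero
    (h : (∑ i : Fin (n + 1), (u i : HRing n) * hx n i) ^ 2 = 0)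
    {i : Fin (n + 1)} (hi : i ≠ Fin.last n) : u i * (u i + 2 * u (Fin.last n)) = 0 := by
  let v : Fin (n + 1) → ℤ[ε][ε] := fun k =>
    if k = i then inl ε + ε else if k = Fin.last n then 2 * ε else 0
  have hv_last : v (Fin.last n) = 2 * ε := by simp [v, hi.symm]
  have hv : ∀ k, k ≠ Fin.last n → v k ^ 2 = v k * v (Fin.last n) := by
    intro k hk
    simp only [v, hv_last, if_neg hk]
    split_ifs
    · linear_combination inl_eps_pow_two - eps_pow_two (R := ℤ[ε])
    · ring
  have hv_last_sq : v (Fin.last n) ^ 2 = 0 := by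
    rw [hv_last]
    linear_combination 4 * eps_pow_two (R := ℤ[ε])
  have key := sq_sum_intCast_mul_eq_zero v hv hv_last_sq h
  rw [Fintype.sum_eq_add i _ hi fun k hk => by simp [v, hk.1, hk.2], hv_last] at key
  simp only [v, ite_true] at key
  have : ((2 * (u i * (u i + 2 * u (Fin.last n))) : ℤ) : ℤ[ε][ε]) * (inl ε * ε) = 0 := by
    push_cast
    linear_combination key - (u i : ℤ[ε][ε]) ^ 2 * inl_eps_pow_two -
      ((u i : ℤ[ε][ε]) + 2 * u (Fin.last n)) ^ 2 * eps_pow_two (R := ℤ[ε])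
  have := eq_zero_of_intCast_mul_inl_eps_mul_eps this
  linarith

end Coefficients

lemma exists_sign_of_sq_sum_eq_zero (hu : Finset.univ.gcd u = 1)
    (h : (∑ i : Fin (n + 1), (u i : HRing n) * hx n i) ^ 2 = 0) :
    ∃ ε : ℤ, (ε = 1 ∨ ε = -1) ∧
      ((u = fun j => if j = Fin.last n then ε else 0) ∨
        ∃ i : Fin (n + 1), i ≠ Fin.last n ∧
          u = fun j => if j = i then 2 * ε else if j = Fin.last n then -ε else 0) := by
  have hdiag : ∀ j, j ≠ Fin.last n → u j = 0 ∨ u j = -2 * u (Fin.last n) := fun j hj =>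
    (mul_eq_zero.mp (mul_add_two_mul_eq_zero_of_sq_sum_eq_zero h hj)).imp id (by omega)
  have hunit : u (Fin.last n) = 1 ∨ u (Fin.last n) = -1 := by
    refine eq_one_or_neg_one_of_forall_dvd_of_gcd_eq_one hu fun j => ?_
    by_cases hj : j = Fin.last n
    · rw [hj]
    rcases hdiag j hj with hj0 | hj0 <;> rw [hj0] <;> simp
  by_cases hsupp : ∃ i, i ≠ Fin.last n ∧ u i ≠ 0
  · obtain ⟨i, hi, hui⟩ := hsupp
    have hu_other : ∀ j, j ≠ i → j ≠ Fin.last n → u j = 0 := fun j hji hj =>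
      (mul_eq_zero.mp (mul_eq_zero_of_sq_sum_eq_zero h (Ne.symm hji) hi hj)).resolve_left hui
    refine ⟨-u (Fin.last n), by omega, Or.inr ⟨i, hi, funext fun j => ?_⟩⟩
    split_ifs with hji hj
    · rw [hji, (hdiag i hi).resolve_left hui]; ring
    · rw [hj, neg_neg]
    · exact hu_other j hji hj
  · push Not at hsupp
    refine ⟨u (Fin.last n), hunit, Or.inl (funext fun j => ?_)⟩
    split_ifs with hj
    · rw [hj]
    · exact hsupp j hj

lemma sq_sum_eq_zero_of_exists_sign
    (hu : ∃ ε : ℤ, (ε = 1 ∨ ε = -1) ∧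
      ((u = fun j => if j = Fin.last n then ε else 0) ∨
        ∃ i : Fin (n + 1), i ≠ Fin.last n ∧
          u = fun j => if j = i then 2 * ε else if j = Fin.last n then -ε else 0)) :
    u ≠ 0 ∧ Finset.univ.gcd u = 1 ∧
      (∑ i : Fin (n + 1), (u i : HRing n) * hx n i) ^ 2 = 0 := by
  obtain ⟨ε, hε, rfl | ⟨i, hi, rfl⟩⟩ := hu
  · refine and_assoc.mp
      ⟨ne_zero_and_gcd_eq_one_of_eq_one_or_neg_one (k := Fin.last n) (by simpa using hε), ?_⟩
    rw [Fintype.sum_eq_single (Fin.last n) fun k hk => by simp [hk]]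
    simp [mul_pow, hx_last_sq]
  · refine and_assoc.mp ⟨ne_zero_and_gcd_eq_one_of_eq_one_or_neg_one (k := Fin.last n)
      (by simp [hi.symm]; omega), ?_⟩
    rw [Fintype.sum_eq_add i _ hi fun k hk => by simp [hk.1, hk.2]]
    simp only [ite_true, if_neg hi.symm]
    push_cast
    linear_combination (4 * (ε : HRing n) ^ 2) * hx_sq_of_ne_last hi +
      (ε : HRing n) ^ 2 * hx_last_sq

def squareZeroCoeffs (n : ℕ) (p : Fin (n + 1) × ℤˣ) : Fin (n + 1) → ℤ :=
  if p.1 = Fin.last n then fun j => if j = Fin.last n then (p.2 : ℤ) else 0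
  else fun j => if j = p.1 then 2 * p.2 else if j = Fin.last n then -p.2 else 0

lemma squareZeroCoeffs_apply_self_ne_zero (p : Fin (n + 1) × ℤˣ) :
    squareZeroCoeffs n p p.1 ≠ 0 := by
  unfold squareZeroCoeffs
  split_ifs <;> simp_all

lemma squareZeroCoeffs_apply_of_ne {p : Fin (n + 1) × ℤˣ} {j : Fin (n + 1)} (hj : j ≠ p.1)
    (hj_last : j ≠ Fin.last n) : squareZeroCoeffs n p j = 0 := by
  unfold squareZeroCoeffs
  split_ifs <;> simp_all

lemma squareZeroCoeffs_apply_last (p : Fin (n + 1) × ℤˣ) :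
    squareZeroCoeffs n p (Fin.last n) = if p.1 = Fin.last n then (p.2 : ℤ) else -p.2 := by
  unfold squareZeroCoeffs
  split_ifs <;> simp_all [eq_comm]

lemma squareZeroCoeffs_injective : Function.Injective (squareZeroCoeffs n) := by
  intro p q h
  have hfst : p.1 = q.1 := by
    by_contra hpq
    by_cases hp : p.1 = Fin.last n
    · exact squareZeroCoeffs_apply_self_ne_zero q
        (h ▸ squareZeroCoeffs_apply_of_ne (Ne.symm hpq) (hp ▸ Ne.symm hpq))
    · exact squareZeroCoeffs_apply_self_ne_zero p (h ▸ squareZeroCoeffs_apply_of_ne hpq hp)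
  have hlast := congrFun h (Fin.last n)
  rw [squareZeroCoeffs_apply_last, squareZeroCoeffs_apply_last, hfst] at hlast
  refine Prod.ext hfst (Units.ext ?_)
  split_ifs at hlast <;> omega

lemma range_squareZeroCoeffs : Set.range (squareZeroCoeffs n) =
    {u | ∃ ε : ℤ, (ε = 1 ∨ ε = -1) ∧
      ((u = fun j => if j = Fin.last n then ε else 0) ∨
        ∃ i : Fin (n + 1), i ≠ Fin.last n ∧
          u = fun j => if j = i then 2 * ε else if j = Fin.last n then -ε else 0)} := by
  ext u
  constructor
  · rintro ⟨⟨i, ε⟩, rfl⟩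
    refine ⟨ε, by rcases Int.units_eq_one_or ε with rfl | rfl <;> simp, ?_⟩
    by_cases hi : i = Fin.last n
    · exact Or.inl (by simp [squareZeroCoeffs, hi])
    · exact Or.inr ⟨i, hi, by simp [squareZeroCoeffs, hi]⟩
  · rintro ⟨ε, hε, rfl | ⟨i, hi, rfl⟩⟩
    all_goals obtain ⟨e, rfl⟩ : ∃ e : ℤˣ, (e : ℤ) = ε := Int.isUnit_iff.mpr hε
    · exact ⟨(Fin.last n, e), by simp [squareZeroCoeffs]⟩
    · exact ⟨(i, e), by simp [squareZeroCoeffs, hi]⟩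

lemma sq_sum_eq_zero_iff_exists_sign :
    (u ≠ 0 ∧ Finset.univ.gcd u = 1 ∧
        (∑ i : Fin (n + 1), (u i : HRing n) * hx n i) ^ 2 = 0) ↔
      ∃ ε : ℤ, (ε = 1 ∨ ε = -1) ∧
        ((u = fun j => if j = Fin.last n then ε else 0) ∨
          ∃ i : Fin (n + 1), i ≠ Fin.last n ∧
            u = fun j => if j = i then 2 * ε else if j = Fin.last n then -ε else 0) :=
  ⟨fun ⟨_, hu, h⟩ => exists_sign_of_sq_sum_eq_zero hu h, sq_sum_eq_zero_of_exists_sign⟩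

end HRing

/-- **The primitive square-zero degree-2 classes of `H` are exactly `±x_n` and
`±(2x_i - x_n)`, `i < n`; in particular there are exactly `2(n+1)` of them**
(here the manifold has `n+1` stages). -/
theorem primitive_square_zero (n : ℕ) :
    (∀ u : Fin (n + 1) → ℤ,
      ((u ≠ 0 ∧ Finset.univ.gcd u = 1 ∧
          (∑ i : Fin (n + 1), (u i : HRing n) * hx n i) ^ 2 = 0) ↔
        (∃ ε : ℤ, (ε = 1 ∨ ε = -1) ∧
          ((u = fun j => if j = Fin.last n then ε else 0) ∨
            ∃ i : Fin (n + 1), i ≠ Fin.last n ∧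
              u = fun j => if j = i then 2 * ε
                else if j = Fin.last n then -ε else 0)))) ∧
    Set.ncard {u : Fin (n + 1) → ℤ |
        u ≠ 0 ∧ Finset.univ.gcd u = 1 ∧
          (∑ i : Fin (n + 1), (u i : HRing n) * hx n i) ^ 2 = 0} =
      2 * (n + 1) := by
  refine ⟨fun u => HRing.sq_sum_eq_zero_iff_exists_sign, ?_⟩
  rw [Set.ext fun u => HRing.sq_sum_eq_zero_iff_exists_sign, ← HRing.range_squareZeroCoeffs,
    Set.ncard_range_of_injective HRing.squareZeroCoeffs_injective, Nat.card_prod, Nat.card_fin,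
    Nat.card_eq_fintype_card, Fintype.card_units_int, mul_comm]
end

section
/- Let $P = [0,2]^2 \subset \mathbb{R}^2$ and $w = (-1,2)$. The slide $\mathcal{F}_w(P \cap \mathbb{Z}^2)$ (obtained by moving the lattice points of $P$ as far as possible in direction $w$ while remaining in $\mathbb{Z}_{\ge 0}^2$, preserving the number of points on each line parallel to $w$) does not contain the point $(1,1)$, even though $(1,1)$ lies in the convex hull of $\mathcal{F}_w(P \cap \mathbb{Z}^2)$. In particular, $\mathcal{F}_w(P \cap \mathbb{Z}^2)$ is not the set of lattice points of any convex polytope. -/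
private lemma line_mem (c : ℤ) (p : ℤ × ℤ) :
    (∃ t : ℝ, (p.1 : ℝ) = ((0:ℝ),(c:ℝ)).1 + t * (-1) ∧ (p.2 : ℝ) = ((0:ℝ),(c:ℝ)).2 + t * 2) ↔
      2 * p.1 + p.2 = c := by
  constructor
  · rintro ⟨t, h1, h2⟩
    have : (2 * p.1 + p.2 : ℝ) = c := by simp at h1 h2; linarith
    exact_mod_cast this
  · intro h
    refine ⟨-(p.1 : ℝ), by ring, ?_⟩
    have : (2 * p.1 + p.2 : ℝ) = c := by exact_mod_cast h
    simp; linarith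

/-- **The slide of `[0,2]² ∩ ℤ²` in direction `w = (-1,2)` is not the lattice-point set of a
convex set:** any `F ⊆ ℤ≥0²` with the same number of points as `[0,2]² ∩ ℤ²` on every line
parallel to `(-1,2)` and closed under adding `(-1,2)` within `ℤ≥0²` omits `(1,1)`, yet
`(1,1)` lies in the convex hull of `F`; hence `F` is not the set of lattice points of any
convex set. -/
theorem slide_not_convex (F : Set (ℤ × ℤ))
    (hFpos : ∀ p ∈ F, 0 ≤ p.1 ∧ 0 ≤ p.2)
    (hcard : ∀ q : ℝ × ℝ,
      ({p : ℤ × ℤ | 0 ≤ p.1 ∧ p.1 ≤ 2 ∧ 0 ≤ p.2 ∧ p.2 ≤ 2} ∩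
          {p : ℤ × ℤ | ∃ t : ℝ, (p.1 : ℝ) = q.1 + t * (-1) ∧ (p.2 : ℝ) = q.2 + t * 2}).ncard =
        (F ∩
          {p : ℤ × ℤ | ∃ t : ℝ, (p.1 : ℝ) = q.1 + t * (-1) ∧ (p.2 : ℝ) = q.2 + t * 2}).ncard)
    (hslide : ∀ p ∈ F, 0 ≤ p.1 - 1 → (p.1 - 1, p.2 + 2) ∈ F) :
    ((1, 1) : ℤ × ℤ) ∉ F ∧
    ((1 : ℝ), (1 : ℝ)) ∈ convexHull ℝ ((fun p : ℤ × ℤ => ((p.1 : ℝ), (p.2 : ℝ))) '' F) ∧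
    ∀ K : Set (ℝ × ℝ), Convex ℝ K →
      F ≠ {p : ℤ × ℤ | ((p.1 : ℝ), (p.2 : ℝ)) ∈ K} := by
  have hc : ∀ c : ℤ,
      ({p : ℤ × ℤ | 0 ≤ p.1 ∧ p.1 ≤ 2 ∧ 0 ≤ p.2 ∧ p.2 ≤ 2} ∩
          {p : ℤ × ℤ | 2 * p.1 + p.2 = c}).ncard =
        (F ∩ {p : ℤ × ℤ | 2 * p.1 + p.2 = c}).ncard := by
    intro c
    have := hcard ((0:ℝ), (c:ℝ))
    have e : {p : ℤ × ℤ | ∃ t : ℝ, (p.1 : ℝ) = ((0:ℝ),(c:ℝ)).1 + t * (-1) ∧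
        (p.2 : ℝ) = ((0:ℝ),(c:ℝ)).2 + t * 2} = {p : ℤ × ℤ | 2 * p.1 + p.2 = c} := by
      ext p; exact line_mem c p
    rwa [e] at this
  -- (1,1) ∉ F
  have h11 : ((1, 1) : ℤ × ℤ) ∉ F := by
    intro hmem
    have h03 : ((0, 3) : ℤ × ℤ) ∈ F := hslide (1,1) hmem (by norm_num)
    have hL : F ∩ {p : ℤ × ℤ | 2 * p.1 + p.2 = 3} = {((0,3) : ℤ × ℤ), (1,1)} := by
      ext p
      constructor
      · rintro ⟨hp, hl⟩
        obtain ⟨h1, h2⟩ := hFpos p hp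
        simp only [Set.mem_setOf_eq] at hl
        have : p = ((0:ℤ),(3:ℤ)) ∨ p = ((1:ℤ),(1:ℤ)) := by
          rcases p with ⟨x, y⟩
          simp only [Prod.mk.injEq]
          omega
        simpa using this
      · rintro (rfl | rfl) <;> exact ⟨by assumption, by norm_num⟩
    have hLHS : ({p : ℤ × ℤ | 0 ≤ p.1 ∧ p.1 ≤ 2 ∧ 0 ≤ p.2 ∧ p.2 ≤ 2} ∩
        {p : ℤ × ℤ | 2 * p.1 + p.2 = 3}) = {((1,1) : ℤ × ℤ)} := by
      ext ⟨x, y⟩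
      simp only [Set.mem_inter_iff, Set.mem_setOf_eq, Set.mem_singleton_iff, Prod.mk.injEq]
      omega
    have := hc 3
    rw [hLHS, hL, Set.ncard_singleton, Set.ncard_pair (by norm_num)] at this
    norm_num at this
  -- (1,0) ∈ F
  have h10 : ((1, 0) : ℤ × ℤ) ∈ F := by
    by_contra h
    have hsub : F ∩ {p : ℤ × ℤ | 2 * p.1 + p.2 = 2} ⊆ {((0,2) : ℤ × ℤ)} := by
      rintro ⟨x, y⟩ ⟨hp, hl⟩
      obtain ⟨h1, h2⟩ := hFpos _ hp
      have hl' : 2 * x + y = 2 := hl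
      have h1' : 0 ≤ x := h1
      have h2' : 0 ≤ y := h2
      have hne : ¬(x = 1 ∧ y = 0) := fun ⟨hx, hy⟩ => h (by subst hx; subst hy; exact hp)
      simp only [Set.mem_singleton_iff, Prod.mk.injEq]
      omega
    have hle : (F ∩ {p : ℤ × ℤ | 2 * p.1 + p.2 = 2}).ncard ≤ 1 := by
      have := Set.ncard_le_ncard hsub (Set.finite_singleton _)
      simpa using this
    have hLHS : ({p : ℤ × ℤ | 0 ≤ p.1 ∧ p.1 ≤ 2 ∧ 0 ≤ p.2 ∧ p.2 ≤ 2} ∩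
        {p : ℤ × ℤ | 2 * p.1 + p.2 = 2}) = {((0,2) : ℤ × ℤ), (1,0)} := by
      ext ⟨x, y⟩
      simp only [Set.mem_inter_iff, Set.mem_setOf_eq, Set.mem_insert_iff,
        Set.mem_singleton_iff, Prod.mk.injEq]
      omega
    have := hc 2
    rw [hLHS, Set.ncard_pair (by norm_num)] at this
    omega
  -- (1,2) ∈ F
  have h12 : ((1, 2) : ℤ × ℤ) ∈ F := by
    by_contra h
    have h20 : ((2, 0) : ℤ × ℤ) ∉ F := fun h20 => h (hslide (2,0) h20 (by norm_num))
    have hsub : F ∩ {p : ℤ × ℤ | 2 * p.1 + p.2 = 4} ⊆ {((0,4) : ℤ × ℤ)} := by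
      rintro ⟨x, y⟩ ⟨hp, hl⟩
      obtain ⟨h1, h2⟩ := hFpos _ hp
      have hl' : 2 * x + y = 4 := hl
      have h1' : 0 ≤ x := h1
      have h2' : 0 ≤ y := h2
      have hne1 : ¬(x = 1 ∧ y = 2) := fun ⟨hx, hy⟩ => h (by subst hx; subst hy; exact hp)
      have hne2 : ¬(x = 2 ∧ y = 0) := fun ⟨hx, hy⟩ => h20 (by subst hx; subst hy; exact hp)
      simp only [Set.mem_singleton_iff, Prod.mk.injEq]
      omega
    have hle : (F ∩ {p : ℤ × ℤ | 2 * p.1 + p.2 = 4}).ncard ≤ 1 := by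
      have := Set.ncard_le_ncard hsub (Set.finite_singleton _)
      simpa using this
    have hLHS : ({p : ℤ × ℤ | 0 ≤ p.1 ∧ p.1 ≤ 2 ∧ 0 ≤ p.2 ∧ p.2 ≤ 2} ∩
        {p : ℤ × ℤ | 2 * p.1 + p.2 = 4}) = {((1,2) : ℤ × ℤ), (2,0)} := by
      ext ⟨x, y⟩
      simp only [Set.mem_inter_iff, Set.mem_setOf_eq, Set.mem_insert_iff,
        Set.mem_singleton_iff, Prod.mk.injEq]
      omega
    have := hc 4
    rw [hLHS, Set.ncard_pair (by norm_num)] at this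
    omega
  refine ⟨h11, ?_, ?_⟩
  · have hx : ((1:ℝ), (0:ℝ)) ∈ (fun p : ℤ × ℤ => ((p.1 : ℝ), (p.2 : ℝ))) '' F :=
      ⟨(1,0), h10, by norm_num⟩
    have hy : ((1:ℝ), (2:ℝ)) ∈ (fun p : ℤ × ℤ => ((p.1 : ℝ), (p.2 : ℝ))) '' F :=
      ⟨(1,2), h12, by norm_num⟩
    have := (convex_convexHull ℝ _) (subset_convexHull ℝ _ hx) (subset_convexHull ℝ _ hy)
      (by norm_num : (0:ℝ) ≤ 1/2) (by norm_num : (0:ℝ) ≤ 1/2) (by norm_num)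
    convert this using 1
    simp [Prod.ext_iff]; norm_num
  · intro K hK heq
    have hx : ((1:ℝ), (0:ℝ)) ∈ K := by have := heq ▸ h10; simpa using this
    have hy : ((1:ℝ), (2:ℝ)) ∈ K := by have := heq ▸ h12; simpa using this
    have hmid : ((1:ℝ), (1:ℝ)) ∈ K := by
      have := hK hx hy (by norm_num : (0:ℝ) ≤ 1/2) (by norm_num : (0:ℝ) ≤ 1/2) (by norm_num)
      convert this using 1
      simp [Prod.ext_iff]; norm_num
    have : ((1,1) : ℤ × ℤ) ∈ F := by rw [heq]; simpa using hmid
    exact h11 this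
end

section
/- Define $\Psi : \mathbb{Z}[x_1,\dots,x_n] \to \mathbb{Z}[\tilde x_1,\dots,\tilde x_n]/(\tilde x_i^2 + \sum_j \tilde A^i_j \tilde x_i \tilde x_j)$ by $\Psi(x_k) = \tilde x_k - \gamma \tilde x_\ell$ and $\Psi(x_i) = \tilde x_i$ for $i \ne k$, where $1 \le k < \ell \le n$, $\gamma \in \mathbb{Z}$, and $\tilde A$ is strictly upper-triangular. Then in the target ring: $\Psi(x_k^2 + \sum_j A^k_j x_k x_j) = (A^k_\ell - \tilde A^k_\ell - 2\gamma)\, \tilde x_k \tilde x_\ell + \sum_{j \ne \ell} (A^k_j - \tilde A^k_j)\, \tilde x_k \tilde x_j - \sum_{j \ne \ell} \gamma (A^k_j - A^k_\ell \tilde A^\ell_j + \gamma \tilde A^\ell_j)\, \tilde x_\ell \tilde x_j$. -/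
open MvPolynomial

lemma hsq (n : ℕ) (At : Fin n → Fin n → ℤ) (i : Fin n) :
    bx n At i ^ 2 = - ∑ j, ((At i j : ℤ) : BottRing n At) * bx n At i * bx n At j := by
  rw [eq_neg_iff_add_eq_zero]
  have : (Ideal.Quotient.mk (bottIdeal n At)) (X i ^ 2 + ∑ j : Fin n, C (At i j) * X i * X j) = 0 := by
    rw [Ideal.Quotient.eq_zero_iff_mem]
    exact Ideal.subset_span ⟨i, rfl⟩
  rw [← this]
  simp only [map_add, map_sum, map_pow, map_mul, bx]
  congr 1

set_option maxHeartbeats 2000000 in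
/-- **The value of `Ψ` on the relation `x_k² + ∑_j A^k_j x_k x_j`,** where
`Ψ(x_k) = x̃_k - γ x̃_ℓ` and `Ψ(x_i) = x̃_i` for `i ≠ k`. -/
theorem Psi_on_relation {n : ℕ} (A At : Fin n → Fin n → ℤ)
    (hA : ∀ i j : Fin n, j ≤ i → A i j = 0)
    (hAt : ∀ i j : Fin n, j ≤ i → At i j = 0)
    (k l : Fin n) (hkl : k < l) (γ : ℤ) :
    (fun Psix : Fin n → BottRing n At =>
        Psix k ^ 2 + ∑ j : Fin n, (A k j : BottRing n At) * Psix k * Psix j =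
          ((A k l - At k l - 2 * γ : ℤ) : BottRing n At) * bx n At k * bx n At l +
            ∑ j ∈ Finset.univ.erase l,
              ((A k j - At k j : ℤ) : BottRing n At) * bx n At k * bx n At j -
            ∑ j ∈ Finset.univ.erase l,
              ((γ * (A k j - A k l * At l j + γ * At l j) : ℤ) : BottRing n At) *
                bx n At l * bx n At j)
      (fun j => if j = k then bx n At k - (γ : BottRing n At) * bx n At l
        else bx n At j) := by
  have hAkk : A k k = 0 := hA k k le_rfl
  have hAtll : At l l = 0 := hAt l l le_rfl
  simp only []
  have h1 : ∑ j : Fin n, (A k j : BottRing n At) * (bx n At k - (γ : BottRing n At) * bx n At l) *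
        (if j = k then bx n At k - (γ : BottRing n At) * bx n At l else bx n At j)
      = ∑ j : Fin n, (A k j : BottRing n At) * (bx n At k - (γ : BottRing n At) * bx n At l) * bx n At j := by
    refine Finset.sum_congr rfl fun j _ => ?_
    by_cases h : j = k
    · subst h; simp [hAkk]
    · simp [h]
  simp only [if_true]
  rw [h1,
    Finset.sum_erase_eq_sub (Finset.mem_univ l),
    Finset.sum_erase_eq_sub (Finset.mem_univ l)]
  rw [sub_sq, hsq n At k, mul_pow, hsq n At l]
  push_cast [hAtll]
  have hll : bx n At l * bx n At l = -∑ j, ((At l j : ℤ) : BottRing n At) * bx n At l * bx n At j := by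
    rw [← sq, hsq]
  have h3 : ∑ j : Fin n, ((A k j : ℤ) : BottRing n At) * (bx n At k - (γ:ℤ) * bx n At l) * bx n At j
      = (∑ j : Fin n, ((A k j : ℤ) : BottRing n At) * bx n At k * bx n At j)
        - ((γ:ℤ) : BottRing n At) * ∑ j : Fin n, ((A k j : ℤ) : BottRing n At) * bx n At l * bx n At j := by
    rw [Finset.mul_sum, ← Finset.sum_sub_distrib]
    exact Finset.sum_congr rfl fun j _ => by ring
  have h4 : ∑ j : Fin n, (((A k j : ℤ) : BottRing n At) - ((At k j : ℤ) : BottRing n At)) * bx n At k * bx n At j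
      = (∑ j : Fin n, ((A k j : ℤ) : BottRing n At) * bx n At k * bx n At j)
        - ∑ j : Fin n, ((At k j : ℤ) : BottRing n At) * bx n At k * bx n At j := by
    rw [← Finset.sum_sub_distrib]
    exact Finset.sum_congr rfl fun j _ => by ring
  have h5 : ∑ j : Fin n, ((γ:ℤ) : BottRing n At) * (((A k j : ℤ) : BottRing n At) - ((A k l : ℤ) : BottRing n At) * ((At l j : ℤ) : BottRing n At) + ((γ:ℤ) : BottRing n At) * ((At l j : ℤ) : BottRing n At)) * bx n At l * bx n At j
      = ((γ:ℤ) : BottRing n At) * (∑ j : Fin n, ((A k j : ℤ) : BottRing n At) * bx n At l * bx n At j)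
        - ((γ:ℤ) : BottRing n At) * ((A k l : ℤ) : BottRing n At) * (∑ j : Fin n, ((At l j : ℤ) : BottRing n At) * bx n At l * bx n At j)
        + ((γ:ℤ) : BottRing n At) * ((γ:ℤ) : BottRing n At) * (∑ j : Fin n, ((At l j : ℤ) : BottRing n At) * bx n At l * bx n At j) := by
    rw [Finset.mul_sum, Finset.mul_sum, Finset.mul_sum, ← Finset.sum_sub_distrib, ← Finset.sum_add_distrib]
    exact Finset.sum_congr rfl fun j _ => by ring
  rw [h3, h4, h5]
  linear_combination (-((γ:ℤ) : BottRing n At) * ((A k l : ℤ) : BottRing n At)) * hll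
end

section
/- Let $A, \tilde A$ be strictly upper-triangular $n \times n$ integer matrices with $1 \le k < \ell \le n$, satisfying the relations of the cohomology isomorphism (with $\gamma = \tfrac{1}{2}(A^k_\ell - \tilde A^k_\ell) \in \mathbb{Z}$): $\tilde A^i_\ell = A^i_\ell - \gamma A^i_k$ for $i \ne k$, $\tilde A^i_j = A^i_j$ for $j \ne \ell$, $A^k_j = \tfrac{1}{2}(A^k_\ell + \tilde A^k_\ell)A^\ell_j$ for $j \ne \ell$, and $\tilde\lambda_\ell = \lambda_\ell - \gamma\lambda_k$, $\tilde\lambda_j = \lambda_j$ for $j \ne \ell$. Define $\Lambda(J) = (-1)^m \lambda_{i_0} A^{i_0}_{i_1}\cdots A^{i_{m-1}}_{i_m}$ for $J = \{i_0 < \cdots < i_m\}$, and $\tilde\Lambda$ analogously with $\tilde A, \tilde\lambda$. Then for every $J \subseteq \{1,\dots,n\} \setminus \{k,\ell\}$: $\Lambda(J \cup \{\ell\}) + \tfrac{1}{2}\Lambda(J \cup \{k,\ell\}) = \tilde\Lambda(J \cup \{\ell\}) + \tfrac{1}{2}\tilde\Lambda(J \cup \{k,\ell\})$. -/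
open Finset

/-!
Write `Λ_f` for the chain value with an arbitrary head weight `f` in place of `λ`; then
`Λ_f(a :: M) = -f(a) Λ_{A a ·}(M)`. Peeling off the elements of `J` below `k` replaces `λ, λ̃` by
the rows `A a ·, Ã a ·` with `a < k`, and these are related by the same shear (column `ℓ` minus
`γ` times column `k`) as `λ, λ̃`. Rows `i > k` of `A` and `Ã` coincide because `A^i_k = 0`, so for
a chain starting at `k` or beyond only the head can differ; the only case where it does, the chain
starting at `ℓ`, is balanced by `2γ = A^k_ℓ - Ã^k_ℓ`.
-/

section SortSplit

variable {ι : Type*} [LinearOrder ι]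

theorem Finset.sort_eq_filter_lt_append_filter_gt {s : Finset ι} {k : ι} (hk : k ∉ s) :
    s.sort (· ≤ ·) = (s.filter (· < k)).sort (· ≤ ·) ++ (s.filter (k < ·)).sort (· ≤ ·) := by
  refine (sortedLT_sort s).eq_of_mem_iff ?_ fun a => ?_
  · refine List.sortedLT_iff_pairwise.mpr (List.pairwise_append.mpr ⟨?_, ?_, ?_⟩)
    · exact (sortedLT_sort _).pairwise
    · exact (sortedLT_sort _).pairwise
    · simp only [mem_sort, mem_filter]
      exact fun a ha b hb => ha.2.trans hb.2
  · simp only [mem_sort, List.mem_append, mem_filter]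
    rcases lt_trichotomy a k with h | rfl | h
    · simp [h, h.not_gt]
    · simp [hk]
    · simp [h, h.not_gt]

theorem Finset.sort_insert_eq_filter_lt_append_cons {s : Finset ι} {k : ι} (hk : k ∉ s) :
    (insert k s).sort (· ≤ ·) =
      (s.filter (· < k)).sort (· ≤ ·) ++ k :: (s.filter (k < ·)).sort (· ≤ ·) := by
  refine (sortedLT_sort _).eq_of_mem_iff ?_ fun a => ?_
  · refine List.sortedLT_iff_pairwise.mpr (List.pairwise_append.mpr ⟨?_, ?_, ?_⟩)
    · exact (sortedLT_sort _).pairwise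
    · refine List.pairwise_cons.mpr ⟨?_, (sortedLT_sort _).pairwise⟩
      simp only [mem_sort, mem_filter]
      exact fun b hb => hb.2
    · simp only [mem_sort, mem_filter, List.mem_cons]
      rintro a ha b (rfl | hb)
      exacts [ha.2, ha.2.trans hb.2]
  · simp only [mem_sort, List.mem_append, List.mem_cons, mem_filter, mem_insert]
    rcases lt_trichotomy a k with h | rfl | h
    · simp [h, h.ne, h.not_gt]
    · simp
    · simp [h, h.ne', h.not_gt]

end SortSplit

section ChainList

variable {ι : Type*} (B : ι → ι → ℝ)

noncomputable def chainList : (ι → ℝ) → List ι → ℝ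
  | _, [] => 0
  | f, [a] => f a
  | f, a :: b :: rest => -(f a * chainList (B a) (b :: rest))

variable {B}

theorem chainList_cons_of_ne_nil (f : ι → ℝ) (a : ι) {M : List ι} (hM : M ≠ []) :
    chainList B f (a :: M) = -(f a * chainList B (B a) M) := by
  obtain ⟨b, rest, rfl⟩ := List.exists_cons_of_ne_nil hM
  rfl

theorem chainList_cons_eq_mul (f : ι → ℝ) (a : ι) (M : List ι) :
    chainList B f (a :: M) = f a * chainList B 1 (a :: M) := by
  cases M with
  | nil => simp [chainList]
  | cons b rest => simp [chainList]

theorem chainList_cons_eq_mul_prod_zip (f : ι → ℝ) (a : ι) (rest : List ι) :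
    chainList B f (a :: rest) =
      (-1) ^ rest.length * f a * (((a :: rest).zip rest).map (fun p => B p.1 p.2)).prod := by
  induction rest generalizing a f with
  | nil => simp [chainList]
  | cons b rest ih =>
    rw [chainList_cons_of_ne_nil f a (List.cons_ne_nil b rest), ih]
    simp only [List.length_cons, List.zip_cons_cons, List.map_cons, List.prod_cons, pow_succ]
    ring

theorem chainList_congr {Bt : ι → ι → ℝ} {f ft : ι → ℝ} {a : ι} {M : List ι}
    (hrow : ∀ i ∈ a :: M, Bt i = B i) (ha : ft a = f a) :
    chainList Bt ft (a :: M) = chainList B f (a :: M) := by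
  induction M generalizing a f ft with
  | nil => simpa [chainList] using ha
  | cons b rest ih =>
    rw [chainList_cons_of_ne_nil _ _ (List.cons_ne_nil b rest),
      chainList_cons_of_ne_nil _ _ (List.cons_ne_nil b rest), ha, hrow a (by simp),
      ih (fun i hi => hrow i (List.mem_cons_of_mem a hi)) rfl]

end ChainList

theorem chainVal_eq_chainList {n : ℕ} (A : Fin n → Fin n → ℤ) (lam : Fin n → ℝ)
    (J : Finset (Fin n)) :
    chainVal A lam J = chainList (fun i j => (A i j : ℝ)) lam (J.sort (· ≤ ·)) := by
  rw [chainVal]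
  split
  next h => rw [h]; rfl
  next a rest h => rw [h, chainList_cons_eq_mul_prod_zip]

section Shear

variable {ι : Type*} [LinearOrder ι] {B Bt : ι → ι → ℝ} {k l : ι} {γ : ℝ}

theorem row_eq_of_lt (hB : ∀ i, k < i → B i k = 0) (h1 : ∀ i ≠ k, Bt i l = B i l - γ * B i k)
    (h2 : ∀ i, ∀ j ≠ l, Bt i j = B i j) {i : ι} (hi : k < i) : Bt i = B i := by
  funext j
  by_cases hj : j = l
  · rw [hj, h1 i hi.ne', hB i hi, mul_zero, sub_zero]
  · exact h2 i j hj

theorem chainList_add_half_cons_eq (hkl : k < l) (hB : ∀ i, k < i → B i k = 0)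
    (hγ : 2 * γ = B k l - Bt k l) (h1 : ∀ i ≠ k, Bt i l = B i l - γ * B i k)
    (h2 : ∀ i, ∀ j ≠ l, Bt i j = B i j) {f ft : ι → ℝ} (hfl : ft l = f l - γ * f k)
    (hf : ∀ j ≠ l, ft j = f j) {M : List ι} (hM : ∀ x ∈ M, k < x) :
    chainList B f M + 1 / 2 * chainList B f (k :: M) =
      chainList Bt ft M + 1 / 2 * chainList Bt ft (k :: M) := by
  cases M with
  | nil => simp [chainList, hf k hkl.ne]
  | cons q r =>
    have hrow : ∀ i ∈ q :: r, Bt i = B i := fun i hi => row_eq_of_lt hB h1 h2 (hM i hi)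
    rw [chainList_cons_of_ne_nil f k (List.cons_ne_nil q r),
      chainList_cons_of_ne_nil ft k (List.cons_ne_nil q r)]
    by_cases hq : q = l
    · subst hq
      rw [chainList_cons_eq_mul f, chainList_cons_eq_mul ft, chainList_cons_eq_mul (B k),
        chainList_cons_eq_mul (Bt k), chainList_congr hrow rfl, hfl, hf k hkl.ne]
      linear_combination (1 / 2 * f k * chainList B 1 (q :: r)) * hγ
    · rw [chainList_congr hrow (hf q hq), chainList_congr hrow (h2 k q hq), hf k hkl.ne]

theorem chainList_append_add_half_append_cons_eq (hkl : k < l) (hB : ∀ i, k < i → B i k = 0)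
    (hγ : 2 * γ = B k l - Bt k l) (h1 : ∀ i ≠ k, Bt i l = B i l - γ * B i k)
    (h2 : ∀ i, ∀ j ≠ l, Bt i j = B i j) {f ft : ι → ℝ} (hfl : ft l = f l - γ * f k)
    (hf : ∀ j ≠ l, ft j = f j) {s M : List ι} (hs : ∀ x ∈ s, x < k) (hM₀ : M ≠ [])
    (hM : ∀ x ∈ M, k < x) :
    chainList B f (s ++ M) + 1 / 2 * chainList B f (s ++ k :: M) =
      chainList Bt ft (s ++ M) + 1 / 2 * chainList Bt ft (s ++ k :: M) := by
  induction s generalizing f ft with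
  | nil => exact chainList_add_half_cons_eq hkl hB hγ h1 h2 hfl hf hM
  | cons a s ih =>
    have ha : a < k := hs a (List.mem_cons_self ..)
    have ih' := ih (h1 a ha.ne) (h2 a) fun x hx => hs x (List.mem_cons_of_mem a hx)
    simp only [List.cons_append]
    rw [chainList_cons_of_ne_nil f a (by simp [hM₀]), chainList_cons_of_ne_nil f a (by simp),
      chainList_cons_of_ne_nil ft a (by simp [hM₀]), chainList_cons_of_ne_nil ft a (by simp),
      hf a (ha.trans hkl).ne]
    linear_combination (-f a) * ih'

end Shear

theorem Lambda_mixed_identity_general {n : ℕ} (A At : Fin n → Fin n → ℤ)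
    (hA : ∀ i j : Fin n, j ≤ i → A i j = 0)
    (k l : Fin n) (hkl : k < l) (γ : ℤ) (hγ : 2 * γ = A k l - At k l)
    (lam lamt : Fin n → ℝ)
    (h1 : ∀ i ≠ k, At i l = A i l - γ * A i k)
    (h2 : ∀ i : Fin n, ∀ j ≠ l, At i j = A i j)
    (h4 : lamt l = lam l - (γ : ℝ) * lam k)
    (h5 : ∀ j ≠ l, lamt j = lam j)
    (J : Finset (Fin n)) (hk : k ∉ J) :
    chainVal A lam (insert l J) + (1 / 2) * chainVal A lam (insert k (insert l J)) =
      chainVal At lamt (insert l J) +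
        (1 / 2) * chainVal At lamt (insert k (insert l J)) := by
  have hk' : k ∉ insert l J := by simp [hk, hkl.ne]
  simp only [chainVal_eq_chainList, sort_insert_eq_filter_lt_append_cons hk',
    sort_eq_filter_lt_append_filter_gt hk']
  refine chainList_append_add_half_append_cons_eq hkl (fun i hi => by exact_mod_cast hA i k hi.le)
    (by exact_mod_cast hγ) (fun i hi => by exact_mod_cast h1 i hi)
    (fun i j hj => by exact_mod_cast h2 i j hj) h4 h5 ?_ ?_ ?_
  · simp
  · exact List.ne_nil_of_mem (a := l) (by simp [hkl])
  · simp

/-- **The mixed `Λ`-identity:** under the relations of the cohomology isomorphism with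
`γ = ½(A^k_ℓ - Ã^k_ℓ)`, for every `J ⊆ [n] \ {k,ℓ}`,
`Λ(J ∪ {ℓ}) + ½ Λ(J ∪ {k,ℓ}) = Λ̃(J ∪ {ℓ}) + ½ Λ̃(J ∪ {k,ℓ})`. -/
theorem Lambda_mixed_identity {n : ℕ} (A At : Fin n → Fin n → ℤ)
    (hA : ∀ i j : Fin n, j ≤ i → A i j = 0)
    (hAt : ∀ i j : Fin n, j ≤ i → At i j = 0)
    (k l : Fin n) (hkl : k < l) (γ : ℤ) (hγ : 2 * γ = A k l - At k l)
    (lam lamt : Fin n → ℝ)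
    (h1 : ∀ i ≠ k, At i l = A i l - γ * A i k)
    (h2 : ∀ i : Fin n, ∀ j ≠ l, At i j = A i j)
    (h3 : ∀ j ≠ l, 2 * A k j = (A k l + At k l) * A l j)
    (h4 : lamt l = lam l - (γ : ℝ) * lam k)
    (h5 : ∀ j ≠ l, lamt j = lam j)
    (J : Finset (Fin n)) (hk : k ∉ J) (hl : l ∉ J) :
    chainVal A lam (insert l J) + (1 / 2) * chainVal A lam (insert k (insert l J)) =
      chainVal At lamt (insert l J) +
        (1 / 2) * chainVal At lamt (insert k (insert l J)) :=
  Lambda_mixed_identity_general A At hA k l hkl γ hγ lam lamt h1 h2 h4 h5 J hk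
end

section
/- Let $A, \tilde A$ be strictly upper-triangular $n \times n$ integer matrices with $1 \le k < \ell \le n$ satisfying $A^k_j = \tilde A^k_j = \tfrac{1}{2}(A^k_\ell + \tilde A^k_\ell) A^\ell_j$ for $j \ne \ell$, $\tilde A^i_j = A^i_j$ for all $i$ and $j \ne \ell$, and $\lambda_k = \tilde\lambda_k$, $\lambda_j = \tilde\lambda_j$ for $j \ne \ell$. Define $\Lambda, \tilde\Lambda$ as products along chains as above. Then for every subset $J \subseteq \{1,\dots,n\} \setminus \{k,\ell\}$ with $\max(J) > \ell$: $\Lambda(J \cup \{k\}) = \tilde\Lambda(J \cup \{k\}) = -\tfrac{1}{2}\Lambda(J \cup \{k,\ell\}) - \tfrac{1}{2}\tilde\Lambda(J \cup \{k,\ell\})$. -/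
/-!
Peel off the elements of `J` below `k` one at a time: the smallest element `a` of each of the
three chains contributes the same factor `-λ_a A^a_m`, since `a` and its successor `m` differ
from `ℓ`, where `Ã` and `λ̃` agree with `A` and `λ`. Once `k` is the smallest element, let `m`
be the smallest element of `J`. If `m < ℓ`, then `A^ℓ_m = 0` forces `A^k_m = 0`, and all three
chains contain the factor `A^k_m`. If `m > ℓ`, the chains through `ℓ` replace the factor
`A^k_m` of `Λ(J ∪ {k})` by `-A^k_ℓ A^ℓ_m` and `-Ã^k_ℓ A^ℓ_m`, and the hypothesis on `A^k_m`
is exactly the claim.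
-/

open Finset

section ChainVal

variable {n : ℕ}

theorem chainVal_congr {A At : Fin n → Fin n → ℤ} {lam lamt : Fin n → ℝ} {l : Fin n}
    (h1 : ∀ i : Fin n, ∀ j ≠ l, At i j = A i j) (h3 : ∀ j ≠ l, lamt j = lam j)
    {S : Finset (Fin n)} (hl : l ∉ S) : chainVal At lamt S = chainVal A lam S := by
  have hne : ∀ x ∈ S.sort (· ≤ ·), x ≠ l := by
    rintro x hx rfl
    exact hl ((mem_sort _).1 hx)
  unfold chainVal
  rcases hS : S.sort (· ≤ ·) with _ | ⟨a, rest⟩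
  · rfl
  · rw [hS] at hne
    dsimp only
    rw [h3 a (hne a List.mem_cons_self)]
    congr 2
    refine List.map_congr_left fun p hp => ?_
    rw [h1 _ _ (hne _ (List.mem_cons_of_mem _ (List.of_mem_zip hp).2))]

theorem chainVal_insert_of_forall_lt (A : Fin n → Fin n → ℤ) (lam : Fin n → ℝ)
    {a : Fin n} {S : Finset (Fin n)} (hS : S.Nonempty) (ha : ∀ b ∈ S, a < b) :
    chainVal A lam (insert a S) = -(lam a * A a (S.min' hS)) * chainVal A 1 S := by
  obtain ⟨b, rest, hsort⟩ : ∃ b rest, S.sort (· ≤ ·) = b :: rest :=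
    List.exists_cons_of_ne_nil (by simpa [← List.length_eq_zero_iff] using hS.card_pos.ne')
  have hb : S.min' hS = b := by simp [min'_eq_sorted_zero, hsort]
  have hsort' : (insert a S).sort (· ≤ ·) = a :: b :: rest :=
    by rw [sort_insert _ (fun x hx => (ha x hx).le) (fun h => (ha a h).false), hsort]
  unfold chainVal
  rw [hsort, hsort', hb]
  simp only [List.length_cons, List.zip_cons_cons, List.map_cons, List.prod_cons, Pi.one_apply]
  ring

variable {A At : Fin n → Fin n → ℤ} {k l : Fin n} (hkl : k < l)
  (hA : ∀ i j : Fin n, j ≤ i → A i j = 0)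
  (h1 : ∀ i : Fin n, ∀ j ≠ l, At i j = A i j)
  (h2 : ∀ j ≠ l, 2 * A k j = (A k l + At k l) * A l j)
include hkl hA h1 h2

theorem chainVal_insert_insert_add_of_forall_lt {lam lamt : Fin n → ℝ}
    (h3 : ∀ j ≠ l, lamt j = lam j) {J : Finset (Fin n)} (hkJ : ∀ j ∈ J, k < j) (hl : l ∉ J)
    (hJ : ∃ j ∈ J, l < j) :
    chainVal A lam (insert k (insert l J)) + chainVal At lamt (insert k (insert l J)) =
      -2 * chainVal A lam (insert k J) := by
  have hJne : J.Nonempty := hJ.imp fun _ h => h.1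
  have hkJl : ∀ j ∈ insert l J, k < j := by simpa [hkl] using hkJ
  rw [chainVal_insert_of_forall_lt A lam (insert_nonempty l J) hkJl,
    chainVal_insert_of_forall_lt At lamt (insert_nonempty l J) hkJl,
    chainVal_insert_of_forall_lt A lam hJne hkJ, min'_insert _ _ hJne, h3 k hkl.ne]
  set m := J.min' hJne with hm_def
  have hml : m ≠ l := fun h => hl (h ▸ J.min'_mem hJne)
  rcases hml.lt_or_gt with hm | hm
  · have hAkm : A k m = 0 := by
      have := h2 m hml
      rw [hA l m hm.le, mul_zero] at this
      omega
    rw [min_eq_right hm.le, h1 k m hml, hAkm]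
    simp
  · have hlJ : ∀ j ∈ J, l < j := fun j hj => hm.trans_le (J.min'_le j hj)
    rw [min_eq_left hm.le, chainVal_insert_of_forall_lt A 1 hJne hlJ,
      chainVal_insert_of_forall_lt At 1 hJne hlJ, chainVal_congr h1 (fun _ _ => rfl) hl,
      ← hm_def, h1 l m hml]
    have h2m : (2 : ℝ) * A k m = (A k l + At k l) * A l m := by exact_mod_cast h2 m hml
    simp only [Pi.one_apply]
    linear_combination (-(lam k * chainVal A 1 J)) * h2m

theorem chainVal_insert_insert_add {lam lamt : Fin n → ℝ} (h3 : ∀ j ≠ l, lamt j = lam j)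
    {J : Finset (Fin n)} (hk : k ∉ J) (hl : l ∉ J) (hJ : ∃ j ∈ J, l < j) :
    chainVal A lam (insert k (insert l J)) + chainVal At lamt (insert k (insert l J)) =
      -2 * chainVal A lam (insert k J) := by
  induction J using Finset.induction_on_min generalizing lam lamt with
  | empty => simp at hJ
  | insert a s has ih =>
    have hak_ne : a ≠ k := fun h => hk (h ▸ mem_insert_self a s)
    rcases hak_ne.lt_or_gt with hak | hka
    · obtain ⟨j, hj, hlj⟩ := hJ
      have hs : ∃ j ∈ s, l < j := by
        refine ⟨j, (mem_insert.1 hj).resolve_left ?_, hlj⟩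
        rintro rfl
        exact (hak.trans hkl).asymm hlj
      have hsne : s.Nonempty := hs.imp fun _ h => h.1
      have hk' : ∀ x ∈ insert k s, a < x := by simpa [hak] using has
      have hkl' : ∀ x ∈ insert k (insert l s), a < x := by simpa [hak, hak.trans hkl] using has
      rw [insert_comm l a, insert_comm k a, insert_comm k a,
        chainVal_insert_of_forall_lt A lam (insert_nonempty _ _) hkl',
        chainVal_insert_of_forall_lt At lamt (insert_nonempty _ _) hkl',
        chainVal_insert_of_forall_lt A lam (insert_nonempty _ _) hk']
      set m := (insert k s).min' (insert_nonempty _ _) with hm_def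
      have hmin : (insert k (insert l s)).min' (insert_nonempty _ _) = m := by
        rw [hm_def, min'_insert _ _ (insert_nonempty _ _), min'_insert _ _ hsne,
          min'_insert _ _ hsne, ← min_assoc, min_eq_left hkl.le]
      have hml : m ≠ l := ((min'_le _ _ (mem_insert_self k s)).trans_lt hkl).ne
      rw [hmin, h1 a m hml, h3 a (hak.trans hkl).ne]
      have ih' := ih (lam := 1) (lamt := 1) (fun _ _ => rfl) (fun h => hk (mem_insert_of_mem h))
        (fun h => hl (mem_insert_of_mem h)) hs
      linear_combination (-(lam a * A a m)) * ih'
    · exact chainVal_insert_insert_add_of_forall_lt hkl hA h1 h2 h3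
        (fun j hj => hka.trans_le ((mem_insert.1 hj).elim (·.ge) fun h => (has j h).le)) hl hJ

end ChainVal

theorem Lambda_identity_max_gt_general {n : ℕ} (A At : Fin n → Fin n → ℤ)
    (hA : ∀ i j : Fin n, j ≤ i → A i j = 0)
    (k l : Fin n) (hkl : k < l)
    (lam lamt : Fin n → ℝ)
    (h1 : ∀ i : Fin n, ∀ j ≠ l, At i j = A i j)
    (h2 : ∀ j ≠ l, 2 * A k j = (A k l + At k l) * A l j)
    (h3 : ∀ j ≠ l, lamt j = lam j)
    (J : Finset (Fin n)) (hk : k ∉ J) (hl : l ∉ J)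
    (hJne : J.Nonempty) (hmax : l < J.max' hJne) :
    chainVal A lam (insert k J) = chainVal At lamt (insert k J) ∧
    chainVal A lam (insert k J) =
      -(1 / 2) * chainVal A lam (insert k (insert l J)) -
        (1 / 2) * chainVal At lamt (insert k (insert l J)) := by
  have hlkJ : l ∉ insert k J := by simp [hkl.ne', hl]
  have key := chainVal_insert_insert_add hkl hA h1 h2 h3 hk hl ⟨_, J.max'_mem hJne, hmax⟩
  exact ⟨(chainVal_congr h1 h3 hlkJ).symm, by linarith⟩

/-- **The `Λ`-identity for `max(J) > ℓ`:**
`Λ(J ∪ {k}) = Λ̃(J ∪ {k}) = -½ Λ(J ∪ {k,ℓ}) - ½ Λ̃(J ∪ {k,ℓ})`. -/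
theorem Lambda_identity_max_gt {n : ℕ} (A At : Fin n → Fin n → ℤ)
    (hA : ∀ i j : Fin n, j ≤ i → A i j = 0)
    (hAt : ∀ i j : Fin n, j ≤ i → At i j = 0)
    (k l : Fin n) (hkl : k < l)
    (lam lamt : Fin n → ℝ)
    (h1 : ∀ i : Fin n, ∀ j ≠ l, At i j = A i j)
    (h2 : ∀ j ≠ l, 2 * A k j = (A k l + At k l) * A l j)
    (h3 : ∀ j ≠ l, lamt j = lam j)
    (J : Finset (Fin n)) (hk : k ∉ J) (hl : l ∉ J)
    (hJne : J.Nonempty) (hmax : l < J.max' hJne) :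
    chainVal A lam (insert k J) = chainVal At lamt (insert k J) ∧
    chainVal A lam (insert k J) =
      -(1 / 2) * chainVal A lam (insert k (insert l J)) -
        (1 / 2) * chainVal At lamt (insert k (insert l J)) :=
  Lambda_identity_max_gt_general A At hA k l hkl lam lamt h1 h2 h3 J hk hl hJne hmax
end

section
/- In the graded ring $H = \mathbb{Z}[x_1,\dots,x_n]/(x_i^2 + \sum_j A^i_j x_i x_j)$ with $A$ strictly upper-triangular, fix $k$ and define $\breve A$ by $\breve A^k_j = -A^k_j$ for all $j$, and $\breve A^i_j = A^i_j - A^i_k A^k_j$ for $i \ne k$. Then $\breve A$ is strictly upper-triangular, and the assignment $\breve x_k \mapsto x_k + \sum_j A^k_j x_j$, $\breve x_j \mapsto x_j$ ($j \ne k$) defines a ring isomorphism from $\breve H = \mathbb{Z}[\breve x_1,\dots,\breve x_n]/(\breve x_i^2 + \sum_j \breve A^i_j \breve x_i \breve x_j)$ to $H$. -/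
open MvPolynomial

noncomputable def SF {n : ℕ} (k : Fin n) (A : Fin n → Fin n → ℤ) : MvPolynomial (Fin n) ℤ :=
  ∑ j : Fin n, C (A k j) * X j

noncomputable def FF {n : ℕ} (k : Fin n) (A : Fin n → Fin n → ℤ) (j : Fin n) :
    MvPolynomial (Fin n) ℤ :=
  if j = k then X k + SF k A else X j

noncomputable def gen {n : ℕ} (A : Fin n → Fin n → ℤ) (i : Fin n) : MvPolynomial (Fin n) ℤ :=
  X i ^ 2 + ∑ j : Fin n, C (A i j) * X i * X j

lemma aeval_linsum {n : ℕ} (k : Fin n) (A : Fin n → Fin n → ℤ) (c : Fin n → ℤ)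
    (hck : c k = 0) :
    aeval (FF k A) (∑ j : Fin n, C (c j) * X j) = ∑ j : Fin n, C (c j) * X j := by
  rw [map_sum]
  refine Finset.sum_congr rfl fun j _ => ?_
  by_cases hj : j = k
  · subst hj; simp [hck]
  · simp [FF, hj]

lemma aeval_FF_FF {n : ℕ} (k : Fin n) (A Ab : Fin n → Fin n → ℤ)
    (hAkk : A k k = 0) (hAbkk : Ab k k = 0)
    (hb1 : ∀ j, Ab k j = -A k j) (i : Fin n) :
    aeval (FF k A) (FF k Ab i) = X i := by
  by_cases hi : i = k
  · rw [hi, show FF k Ab k = X k + SF k Ab from if_pos rfl, map_add, aeval_X, SF,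
      aeval_linsum k A (Ab k) hAbkk]
    have hS : (∑ j : Fin n, C (Ab k j) * X j) = -∑ j : Fin n, C (A k j) * X j := by
      rw [← Finset.sum_neg_distrib]
      refine Finset.sum_congr rfl fun j _ => ?_
      rw [hb1 j]; push_cast [map_neg]; ring
    rw [FF, if_pos rfl, SF, hS]; ring
  · simp [FF, hi]

lemma aeval_gen {n : ℕ} (k : Fin n) (A Ab : Fin n → Fin n → ℤ)
    (hAkk : A k k = 0)
    (hb1 : ∀ j, Ab k j = -A k j)
    (hb2 : ∀ i, i ≠ k → ∀ j, Ab i j = A i j - A i k * A k j) (i : Fin n) :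
    aeval (FF k A) (gen Ab i) = gen A i := by
  have hAbkk : Ab k k = 0 := by rw [hb1, hAkk]; ring
  have hC : ∀ a : ℤ, aeval (FF k A) (C a) = C a := fun a => by simp
  simp only [gen, map_add, map_pow, map_sum, map_mul, aeval_X, hC]
  by_cases hi : i = k
  · rw [hi, show FF k A k = X k + SF k A from if_pos rfl]
    have h1 : (∑ j : Fin n, C (Ab k j) * (X k + SF k A) * FF k A j)
        = -(SF k A * (X k + SF k A)) := by
      rw [SF, Finset.sum_mul, ← Finset.sum_neg_distrib]
      refine Finset.sum_congr rfl fun j _ => ?_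
      by_cases hj : j = k
      · rw [hj, hAbkk, hAkk]; simp
      · rw [FF, if_neg hj, hb1, map_neg]; ring
    rw [h1]
    have h2 : (∑ j : Fin n, C (A k j) * X k * X j) = X k * SF k A := by
      rw [SF, Finset.mul_sum]
      exact Finset.sum_congr rfl fun j _ => by ring
    rw [h2]; ring
  · rw [show FF k A i = X i from if_neg hi]
    have h1 : (∑ j : Fin n, C (Ab i j) * X i * FF k A j)
        = (∑ j : Fin n, (C (A i j) * X i * X j - C (A i k) * X i * (C (A k j) * X j)))
          + C (A i k) * X i * SF k A := by
      rw [show C (A i k) * X i * SF k A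
          = ∑ x : Fin n, (if x = k then C (A i k) * X i * SF k A else 0) by
            rw [Finset.sum_ite_eq' (Finset.univ : Finset (Fin n)) k
              (fun _ => C (A i k) * X i * SF k A)]; simp,
        ← Finset.sum_add_distrib]
      refine Finset.sum_congr rfl fun j _ => ?_
      by_cases hj : j = k
      · rw [hj, if_pos rfl, show FF k A k = X k + SF k A from if_pos rfl,
          hb2 i hi k, hAkk]
        simp only [mul_zero, sub_zero, map_zero]
        ring
      · rw [if_neg hj, show FF k A j = X j from if_neg hj, hb2 i hi j, map_sub, map_mul]
        ring
    rw [h1]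
    have h2 : (∑ j : Fin n, (C (A i j) * X i * X j - C (A i k) * X i * (C (A k j) * X j)))
        = (∑ j : Fin n, C (A i j) * X i * X j) - C (A i k) * X i * SF k A := by
      rw [Finset.sum_sub_distrib, SF, Finset.mul_sum]
    rw [h2]; ring

private theorem sign_change_iso' {n : ℕ} (A Ab : Fin n → Fin n → ℤ)
    (hA : ∀ i j : Fin n, j ≤ i → A i j = 0) (k : Fin n)
    (hb1 : ∀ j, Ab k j = -A k j)
    (hb2 : ∀ i ≠ k, ∀ j, Ab i j = A i j - A i k * A k j) :
    (∀ i j : Fin n, j ≤ i → Ab i j = 0) ∧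
    ∃ e : (MvPolynomial (Fin n) ℤ ⧸ bottIdeal n Ab) ≃+* (MvPolynomial (Fin n) ℤ ⧸ bottIdeal n A),
      e (Ideal.Quotient.mk _ (X k)) = Ideal.Quotient.mk _ (X k) + ∑ j : Fin n,
        ((A k j : MvPolynomial (Fin n) ℤ ⧸ bottIdeal n A)) * Ideal.Quotient.mk _ (X j) ∧
      ∀ j ≠ k, e (Ideal.Quotient.mk _ (X j)) = Ideal.Quotient.mk _ (X j) := by
  have hAkk : A k k = 0 := hA k k le_rfl
  have hAbkk : Ab k k = 0 := by rw [hb1, hAkk]; ring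
  have hb1' : ∀ j, A k j = -Ab k j := fun j => by rw [hb1]; ring
  have hAbik : ∀ i, i ≠ k → Ab i k = A i k := fun i hi => by
    rw [hb2 i hi, hAkk]; ring
  have hb2' : ∀ i, i ≠ k → ∀ j, A i j = Ab i j - Ab i k * Ab k j := by
    intro i hi j
    rw [hb2 i hi j, hAbik i hi, hb1 j]; ring
  constructor
  · intro i j hij
    by_cases hi : i = k
    · rw [hi] at hij ⊢
      rw [hb1, hA k j hij]; ring
    · rw [hb2 i hi, hA i j hij]
      by_cases hik : k ≤ i
      · rw [hA i k hik]; ring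
      · push_neg at hik
        rw [hA k j (le_of_lt (lt_of_le_of_lt hij hik))]; ring
  · -- the algebra equivalence on polynomial rings
    have hcomp1 : (aeval (FF k A)).comp (aeval (FF k Ab)) =
        AlgHom.id ℤ (MvPolynomial (Fin n) ℤ) := by
      apply MvPolynomial.algHom_ext
      intro i
      simp only [AlgHom.comp_apply, aeval_X, AlgHom.id_apply]
      exact aeval_FF_FF k A Ab hAkk hAbkk hb1 i
    have hcomp2 : (aeval (FF k Ab)).comp (aeval (FF k A)) =
        AlgHom.id ℤ (MvPolynomial (Fin n) ℤ) := by
      apply MvPolynomial.algHom_ext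
      intro i
      simp only [AlgHom.comp_apply, aeval_X, AlgHom.id_apply]
      exact aeval_FF_FF k Ab A hAbkk hAkk hb1' i
    set f : MvPolynomial (Fin n) ℤ ≃ₐ[ℤ] MvPolynomial (Fin n) ℤ :=
      AlgEquiv.ofAlgHom (aeval (FF k A)) (aeval (FF k Ab)) hcomp1 hcomp2 with hf
    have hfx : ∀ p, f p = aeval (FF k A) p := fun p => rfl
    have hmap : bottIdeal n A
        = (bottIdeal n Ab).map (f.toRingEquiv : MvPolynomial (Fin n) ℤ →+* _) := by
      show Ideal.span (Set.range (gen A)) =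
        Ideal.map _ (Ideal.span (Set.range (gen Ab)))
      rw [Ideal.map_span, ← Set.range_comp]
      have hg : ((f.toRingEquiv : MvPolynomial (Fin n) ℤ →+* MvPolynomial (Fin n) ℤ) ∘ gen Ab)
          = gen A := by
        funext i
        exact aeval_gen k A Ab hAkk hb1 (fun i hi => hb2 i hi) i
      rw [hg]
    refine ⟨Ideal.quotientEquiv _ _ f.toRingEquiv hmap, ?_, ?_⟩
    · rw [Ideal.quotientEquiv_mk]
      have : f.toRingEquiv (X k) = X k + SF k A := by
        show f (X k) = _
        rw [hfx, aeval_X, FF, if_pos rfl]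
      rw [this, map_add, SF, map_sum]
      congr 1
    · intro j hj
      rw [Ideal.quotientEquiv_mk]
      have : f.toRingEquiv (X j) = X j := by
        show f (X j) = _
        rw [hfx, aeval_X, FF, if_neg hj]
      rw [this]

/-- **Sign-change isomorphism:** with `Ă^k_j = -A^k_j` and `Ă^i_j = A^i_j - A^i_k A^k_j`
(`i ≠ k`), the matrix `Ă` is strictly upper-triangular and
`x̆_k ↦ x_k + ∑_j A^k_j x_j`, `x̆_j ↦ x_j` (`j ≠ k`) defines a ring isomorphism
`BottRing Ă ≃+* BottRing A`. -/
theorem sign_change_iso {n : ℕ} (A Ab : Fin n → Fin n → ℤ)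
    (hA : ∀ i j : Fin n, j ≤ i → A i j = 0) (k : Fin n)
    (hb1 : ∀ j, Ab k j = -A k j)
    (hb2 : ∀ i ≠ k, ∀ j, Ab i j = A i j - A i k * A k j) :
    (∀ i j : Fin n, j ≤ i → Ab i j = 0) ∧
    ∃ e : BottRing n Ab ≃+* BottRing n A,
      e (bx n Ab k) = bx n A k + ∑ j : Fin n, (A k j : BottRing n A) * bx n A j ∧
      ∀ j ≠ k, e (bx n Ab j) = bx n A j := by
  obtain ⟨h1, e, he1, he2⟩ := sign_change_iso' A Ab hA k hb1 hb2
  exact ⟨h1, e, he1, he2⟩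
end
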